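/- arXiv:2311.05361 — 8 statements merged into one kernel-verified Lean document; each statement's English description precedes it below -/
import Mathlib

section
/- Let E : ℝ³ → ℝ (ℝ³ with the Euclidean norm ‖·‖) be such that the map P ↦ ½‖P‖² − E(P) is convex and such that 0 ≤ E(P) − E(0) ≤ ½‖P‖² for all P ∈ ℝ³. Then for all P, K ∈ ℝ³: if ‖K‖ ≤ ‖P‖ then E(P−K) − E(P) ≥ −‖K‖·‖P‖ + ½‖K‖², and if ‖K‖ > ‖P‖ then E(P−K) − E(P) ≥ −½‖P‖². -/
/-- Convex-analytic consequence (Lemma 3, following Loss–Miyao–Spohn):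
if `P ↦ ½‖P‖² − E P` is convex and `0 ≤ E P − E 0 ≤ ½‖P‖²`, then
`E (P−K) − E P ≥ −‖K‖‖P‖ + ½‖K‖²` for `‖K‖ ≤ ‖P‖` and
`E (P−K) − E P ≥ −½‖P‖²` for `‖K‖ > ‖P‖`. -/
theorem stmt_0 (E : EuclideanSpace ℝ (Fin 3) → ℝ)
    (hconv : ConvexOn ℝ Set.univ (fun P => (1 : ℝ) / 2 * ‖P‖ ^ 2 - E P))
    (hlow : ∀ P, 0 ≤ E P - E 0)
    (hup : ∀ P, E P - E 0 ≤ (1 : ℝ) / 2 * ‖P‖ ^ 2) :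
    ∀ P K : EuclideanSpace ℝ (Fin 3),
      (‖K‖ ≤ ‖P‖ → E (P - K) - E P ≥ -(‖K‖ * ‖P‖) + (1 : ℝ) / 2 * ‖K‖ ^ 2) ∧
      (‖K‖ > ‖P‖ → E (P - K) - E P ≥ -((1 : ℝ) / 2 * ‖P‖ ^ 2)) := by
  intro P K
  constructor
  · intro hk
    by_cases hK : K = 0
    · simp [hK]
    · have hk0 : 0 < ‖K‖ := norm_pos_iff.mpr hK
      have hp0 : 0 < ‖P‖ := lt_of_lt_of_le hk0 hk
      set p : ℝ := ‖P‖ with hp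
      set k : ℝ := ‖K‖ with hkk
      set y : EuclideanSpace ℝ (Fin 3) := P - (p / k) • K with hy
      set ip : ℝ := inner ℝ P K with hip
      have hcomb : (1 - k / p) • P + (k / p) • y = P - K := by
        rw [hy, smul_sub, smul_smul]
        have h1 : k / p * (p / k) = 1 := by field_simp
        rw [h1, one_smul, sub_smul, one_smul]
        abel
      have ha : (0:ℝ) ≤ 1 - k / p := by
        rw [sub_nonneg]; exact div_le_one_of_le₀ hk (le_of_lt hp0)
      have hb : (0:ℝ) ≤ k / p := by positivity
      have hab : (1 - k / p) + k / p = 1 := by ring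
      have hcv := hconv.2 (Set.mem_univ P) (Set.mem_univ y) ha hb hab
      rw [hcomb] at hcv
      simp only [smul_eq_mul] at hcv
      have hQ2 : ‖P - K‖ ^ 2 = p ^ 2 - 2 * ip + k ^ 2 := by
        rw [hip, hp, hkk]; exact norm_sub_sq_real P K
      have hy2 : ‖y‖ ^ 2 = p ^ 2 - 2 * (p / k) * ip + (p / k) ^ 2 * k ^ 2 := by
        rw [hy]
        rw [norm_sub_sq_real, real_inner_smul_right, norm_smul]
        rw [Real.norm_eq_abs, abs_of_pos (by positivity : (0:ℝ) < p / k)]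
        rw [← hip, ← hkk]; ring
      have hA : (k / p) * ‖y‖ ^ 2 = 2 * k * p - 2 * ip := by
        rw [hy2]; field_simp; ring
      have hμp2 : (k / p) * p ^ 2 = k * p := by field_simp
      have h6 : 0 ≤ (k / p) * (E y - E 0) :=
        mul_nonneg (by positivity) (hlow y)
      have h7 : (k / p) * (E P - E 0) ≤ (k / p) * ((1:ℝ)/2 * p ^ 2) :=
        mul_le_mul_of_nonneg_left (hup P) (by positivity)
      nlinarith [hcv, hQ2, hA, hμp2, h6, h7]
  · intro _
    have h1 := hlow (P - K)
    have h2 := hup P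
    linarith
end

section
/- Let E : ℝ³ → ℝ (ℝ³ with the Euclidean norm ‖·‖) be such that the map P ↦ ½‖P‖² − E(P) is convex and such that 0 ≤ E(P) − E(0) ≤ ½‖P‖² for all P ∈ ℝ³. Then for all P, K ∈ ℝ³: E(P−K) − E(P) ≥ −‖K‖·‖P‖. -/
/-- Lemma 3 (coarse form): if `P ↦ ½‖P‖² − E P` is convex and
`0 ≤ E P − E 0 ≤ ½‖P‖²`, then `E (P−K) − E P ≥ −‖K‖‖P‖`. -/
theorem stmt_1 (E : EuclideanSpace ℝ (Fin 3) → ℝ)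
    (hconv : ConvexOn ℝ Set.univ (fun P => (1 : ℝ) / 2 * ‖P‖ ^ 2 - E P))
    (hlow : ∀ P, 0 ≤ E P - E 0)
    (hup : ∀ P, E P - E 0 ≤ (1 : ℝ) / 2 * ‖P‖ ^ 2) :
    ∀ P K : EuclideanSpace ℝ (Fin 3),
      E (P - K) - E P ≥ -(‖K‖ * ‖P‖) := by
  intro P K
  by_cases hcase : ‖P‖ ≤ 2 * ‖K‖
  · have h1 := hlow (P - K)
    have h2 := hup P
    nlinarith [norm_nonneg P, norm_nonneg K]
  · push_neg at hcase
    by_cases hK : K = 0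
    · simp [hK]
    have hk : (0 : ℝ) < ‖K‖ := norm_pos_iff.mpr hK
    have hp : (0 : ℝ) < ‖P‖ := by linarith
    set μ : ℝ := ‖K‖ / ‖P‖ with hμdef
    have hμ0 : 0 < μ := div_pos hk hp
    have hμ1 : μ < 1 := by
      rw [hμdef, div_lt_one hp]; linarith
    set R : EuclideanSpace ℝ (Fin 3) := P - μ⁻¹ • K with hR
    have hcomb : (1 - μ) • P + μ • R = P - K := by
      rw [hR, smul_sub, smul_smul, mul_inv_cancel₀ hμ0.ne', one_smul, sub_smul,
        one_smul]
      abel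
    have key := hconv.2 (Set.mem_univ P) (Set.mem_univ R)
      (by linarith : (0:ℝ) ≤ 1 - μ) hμ0.le (by ring)
    rw [hcomb] at key
    simp only [smul_eq_mul] at key
    -- key : ½‖P-K‖² - E (P-K) ≤ (1-μ)(½‖P‖² - E P) + μ(½‖R‖² - E R)
    have hRlow := hlow R
    have hPup := hup P
    have step1 : (1:ℝ)/2 * ‖P - K‖^2 - E (P - K) ≤
        ((1:ℝ)/2 * ‖P‖^2 - E P) + μ * ((1:ℝ)/2 * ‖R‖^2) := by
      nlinarith [key, mul_nonneg hμ0.le hRlow,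
        mul_nonneg hμ0.le (by linarith : (0:ℝ) ≤ (1:ℝ)/2 * ‖P‖^2 - (E P - E 0))]
    have e1 : ‖P - K‖^2 = ‖P‖^2 - 2 * (inner ℝ P K : ℝ) + ‖K‖^2 :=
      norm_sub_sq_real P K
    have e2 : ‖R‖^2 = ‖P‖^2 - 2 * (μ⁻¹ * (inner ℝ P K : ℝ)) + (μ⁻¹)^2 * ‖K‖^2 := by
      rw [hR, norm_sub_sq_real, real_inner_smul_right, norm_smul, mul_pow,
        Real.norm_eq_abs, sq_abs]
    have e2' : μ * ‖R‖^2 = 2 * (‖K‖ * ‖P‖) - 2 * (inner ℝ P K : ℝ) := by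
      rw [e2, hμdef]
      field_simp
      ring
    nlinarith [step1, e1, e2', sq_nonneg ‖K‖]
end

section
/- Fix constants c > 0, ξ > 0, g ≥ 0, define ω : ℝ³ → ℝ by ω(k) = √(c²‖k‖² + ξ²‖k‖⁴), and define the form factor v : ℝ³ → ℝ by v(k) = g·√(‖k‖²/ω(k)) for k ≠ 0 and v(0) = 0. Let ρ be a real number with 0 ≤ ρ < c. Then there exists r > 0 (depending only on ρ, g, c, ξ) such that for all k ∈ ℝ³ with k ≠ 0: v(k) · max(√‖k‖, ‖k‖²) ≤ r · (ω(k) − ρ‖k‖). -/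
private lemma aux_mono (a b : ℝ) (ha : 0 ≤ a) (hab : a ≤ b) :
    a * Real.sqrt a ≤ b * Real.sqrt b :=
  mul_le_mul hab (Real.sqrt_le_sqrt hab) (Real.sqrt_nonneg a) (le_trans ha hab)

/-- Scalar content of the bound `‖v(k)R(P,k)‖ ≤ r/(√‖k‖ ∨ ‖k‖²)` in the proof of
Proposition 7: with `ω(k) = √(c²‖k‖² + ξ²‖k‖⁴)` and `v(k) = g√(‖k‖²/ω(k))`,
for `0 ≤ ρ < c` there is `r > 0` such that
`v(k) · (√‖k‖ ∨ ‖k‖²) ≤ r (ω(k) − ρ‖k‖)` for all `k ≠ 0`. -/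
theorem stmt_4 (c ξ g : ℝ) (hc : 0 < c) (hξ : 0 < ξ) (hg : 0 ≤ g)
    (ω v : EuclideanSpace ℝ (Fin 3) → ℝ)
    (hω : ∀ k, ω k = Real.sqrt (c ^ 2 * ‖k‖ ^ 2 + ξ ^ 2 * ‖k‖ ^ 4))
    (hv : ∀ k, k ≠ 0 → v k = g * Real.sqrt (‖k‖ ^ 2 / ω k)) (hv0 : v 0 = 0)
    (ρ : ℝ) (hρ0 : 0 ≤ ρ) (hρc : ρ < c) :
    ∃ r > 0, ∀ k : EuclideanSpace ℝ (Fin 3), k ≠ 0 →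
      v k * max (Real.sqrt ‖k‖) (‖k‖ ^ 2) ≤ r * (ω k - ρ * ‖k‖) := by
  set m : ℝ := min c ξ with hmdef
  have hm : 0 < m := lt_min hc hξ
  have hsm : 0 < Real.sqrt m := Real.sqrt_pos.mpr hm
  have hcρ : 0 < c - ρ := by linarith
  refine ⟨(g + 1) * c / (m * Real.sqrt m * (c - ρ)), by positivity, ?_⟩
  intro k hk
  set t : ℝ := ‖k‖ with htdef
  have ht : 0 < t := norm_pos_iff.mpr hk
  have hct : c * t ≤ ω k := by
    rw [hω k]
    rw [show c * t = Real.sqrt ((c * t) ^ 2) from (Real.sqrt_sq (by positivity)).symm]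
    apply Real.sqrt_le_sqrt
    nlinarith [sq_nonneg (ξ * t ^ 2)]
  have hξt : ξ * t ^ 2 ≤ ω k := by
    rw [hω k]
    rw [show ξ * t ^ 2 = Real.sqrt ((ξ * t ^ 2) ^ 2) from (Real.sqrt_sq (by positivity)).symm]
    apply Real.sqrt_le_sqrt
    nlinarith [sq_nonneg (c * t)]
  have hωpos : 0 < ω k := lt_of_lt_of_le (by positivity) hct
  have hs : 0 < Real.sqrt (ω k) := Real.sqrt_pos.mpr hωpos
  have hmt : m * t ≤ ω k :=
    le_trans (mul_le_mul_of_nonneg_right (min_le_left c ξ) ht.le) hct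
  have hmt2 : m * t ^ 2 ≤ ω k :=
    le_trans (mul_le_mul_of_nonneg_right (min_le_right c ξ) (by positivity)) hξt
  set X : ℝ := max (Real.sqrt t) (t ^ 2) with hXdef
  have key : t * X * (m * Real.sqrt m) ≤ ω k * Real.sqrt (ω k) := by
    rcases le_total t 1 with h1 | h1
    · have hts : t ≤ Real.sqrt t := by
        have h := Real.sq_sqrt ht.le
        have h2 : Real.sqrt t ≤ 1 := Real.sqrt_le_one.mpr h1
        nlinarith [Real.sqrt_nonneg t]
      have hX : X = Real.sqrt t := max_eq_left (by nlinarith)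
      have := aux_mono (m * t) (ω k) (by positivity) hmt
      rw [Real.sqrt_mul hm.le t] at this
      rw [hX]
      nlinarith [this]
    · have hst : Real.sqrt t ≤ t := by
        have h2 : t ≤ t ^ 2 := by nlinarith
        calc Real.sqrt t ≤ Real.sqrt (t ^ 2) := Real.sqrt_le_sqrt h2
          _ = t := Real.sqrt_sq ht.le
      have hX : X = t ^ 2 := max_eq_right (by nlinarith)
      have h3 := aux_mono (m * t ^ 2) (ω k) (by positivity) hmt2
      rw [show m * t ^ 2 = m * t * t by ring] at h3
      rw [Real.sqrt_mul (by positivity) t, Real.sqrt_mul hm.le t] at h3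
      have hsq : Real.sqrt t * Real.sqrt t = t := Real.mul_self_sqrt ht.le
      have he : m * t * t * (Real.sqrt m * Real.sqrt t * Real.sqrt t)
          = t * t ^ 2 * (m * Real.sqrt m) := by
        rw [mul_assoc (Real.sqrt m), hsq]; ring
      rw [hX]
      linarith [he ▸ h3]
  have hv' : v k = g * t / Real.sqrt (ω k) := by
    rw [hv k hk, Real.sqrt_div (by positivity : (0:ℝ) ≤ t ^ 2) (ω k),
      Real.sqrt_sq ht.le, mul_div_assoc]
  rw [hv', div_mul_eq_mul_div, div_le_iff₀ hs, div_mul_eq_mul_div,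
    div_mul_eq_mul_div, le_div_iff₀ (by positivity)]
  have h2 : (c - ρ) * ω k ≤ c * (ω k - ρ * t) := by
    nlinarith [mul_le_mul_of_nonneg_left hct hρ0]
  nlinarith [mul_le_mul_of_nonneg_left key (mul_nonneg hg hcρ.le),
    mul_le_mul_of_nonneg_right h2 hs.le,
    mul_nonneg (mul_nonneg hcρ.le hωpos.le) hs.le]
end

section
/- Fix constants c > 0, ξ > 0, g ≥ 0, define ω : ℝ³ → ℝ by ω(k) = √(c²‖k‖² + ξ²‖k‖⁴), and define v : ℝ³ → ℝ by v(k) = g·√(‖k‖²/ω(k)) for k ≠ 0 and v(0) = 0. Then there exists C > 0 (depending only on g, c, ξ) such that for all k, p ∈ ℝ³ with k ≠ 0 and ‖p‖ ≤ ½‖k‖: |v(k+p) − v(k)| ≤ C‖p‖/√(ω(k)). -/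
/-- If `0 ≤ x` and `0 < y` then `|√x − √y| ≤ |x − y| / √y`. -/
lemma aux_sqrt_lip {x y : ℝ} (hx : 0 ≤ x) (hy : 0 < y) :
    |Real.sqrt x - Real.sqrt y| ≤ |x - y| / Real.sqrt y := by
  have hsy : 0 < Real.sqrt y := Real.sqrt_pos.mpr hy
  rw [le_div_iff₀ hsy]
  have h1 : (Real.sqrt x - Real.sqrt y) * (Real.sqrt x + Real.sqrt y) = x - y := by
    have hx2 := Real.sq_sqrt hx
    have hy2 := Real.sq_sqrt hy.le
    linear_combination hx2 - hy2
  have h2 : |x - y| = |Real.sqrt x - Real.sqrt y| * (Real.sqrt x + Real.sqrt y) := by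
    rw [← h1, abs_mul,
      abs_of_nonneg (show (0:ℝ) ≤ Real.sqrt x + Real.sqrt y by positivity)]
  rw [h2]
  gcongr
  have := Real.sqrt_nonneg x
  linarith

set_option maxHeartbeats 1000000 in
/-- Lipschitz-type estimate (eq:diffest11) on the form factor used in the proof of
Proposition 7: with `ω(k) = √(c²‖k‖² + ξ²‖k‖⁴)` and `v(k) = g√(‖k‖²/ω(k))`,
there is `C > 0` such that `|v(k+p) − v(k)| ≤ C‖p‖/√(ω(k))`
for all `k ≠ 0` and `‖p‖ ≤ ½‖k‖`. -/
theorem stmt_5 (c ξ g : ℝ) (hc : 0 < c) (hξ : 0 < ξ) (hg : 0 ≤ g)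
    (ω v : EuclideanSpace ℝ (Fin 3) → ℝ)
    (hω : ∀ k, ω k = Real.sqrt (c ^ 2 * ‖k‖ ^ 2 + ξ ^ 2 * ‖k‖ ^ 4))
    (hv : ∀ k, k ≠ 0 → v k = g * Real.sqrt (‖k‖ ^ 2 / ω k)) (hv0 : v 0 = 0) :
    ∃ C > 0, ∀ k p : EuclideanSpace ℝ (Fin 3), k ≠ 0 → ‖p‖ ≤ ‖k‖ / 2 →
      |v (k + p) - v k| ≤ C * ‖p‖ / Real.sqrt (ω k) := by
  refine ⟨5 / 2 * g + 1, by positivity, ?_⟩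
  intro k p hk hp
  set b := ‖k‖ with hbdef
  set a := ‖k + p‖ with hadef
  set q := ‖p‖ with hqdef
  have hb0 : 0 < b := norm_pos_iff.mpr hk
  have hq0 : 0 ≤ q := norm_nonneg p
  have hab : |a - b| ≤ q := by
    have := abs_norm_sub_norm_le (k + p) k
    simpa [hadef, hbdef, hqdef] using this
  obtain ⟨hab1, hab2⟩ := abs_le.mp hab
  have ha_lb : b / 2 ≤ a := by linarith
  have ha_ub : a ≤ 3 * b / 2 := by linarith
  have ha0 : 0 < a := by linarith
  have hkp : k + p ≠ 0 := by
    intro h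
    rw [hadef, h, norm_zero] at ha0
    exact lt_irrefl 0 ha0
  set A := c ^ 2 + ξ ^ 2 * a ^ 2 with hAdef
  set B := c ^ 2 + ξ ^ 2 * b ^ 2 with hBdef
  have hA : 0 < A := by positivity
  have hB : 0 < B := by positivity
  set sA := Real.sqrt A with hsAdef
  set sB := Real.sqrt B with hsBdef
  have hsA0 : 0 < sA := Real.sqrt_pos.mpr hA
  have hsB0 : 0 < sB := Real.sqrt_pos.mpr hB
  have hsA2 : sA ^ 2 = A := Real.sq_sqrt hA.le
  have hsB2 : sB ^ 2 = B := Real.sq_sqrt hB.le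
  have hcA : c ≤ sA := by
    rw [hsAdef]
    rw [show c = Real.sqrt (c ^ 2) from (Real.sqrt_sq hc.le).symm]
    exact Real.sqrt_le_sqrt (le_add_of_nonneg_right (by positivity))
  -- ω k = b * sB, ω (k+p) = a * sA
  have hωk : ω k = b * sB := by
    rw [hω k, show c ^ 2 * ‖k‖ ^ 2 + ξ ^ 2 * ‖k‖ ^ 4 = ‖k‖ ^ 2 * B by rw [hBdef]; ring,
      Real.sqrt_mul (by positivity), Real.sqrt_sq (norm_nonneg k)]
  have hωkp : ω (k + p) = a * sA := by
    rw [hω (k + p), show c ^ 2 * ‖k + p‖ ^ 2 + ξ ^ 2 * ‖k + p‖ ^ 4 = ‖k + p‖ ^ 2 * A by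
      rw [hAdef]; ring, Real.sqrt_mul (by positivity), Real.sqrt_sq (norm_nonneg (k + p))]
  set ua := a / sA with huadef
  set ub := b / sB with hubdef
  have hua0 : 0 ≤ ua := by positivity
  have hub0 : 0 < ub := by positivity
  have hvk : v k = g * Real.sqrt ub := by
    rw [hv k hk, hωk, hubdef, ← hbdef, show b ^ 2 / (b * sB) = b / sB by
      rw [pow_two, mul_div_mul_left _ _ hb0.ne']]
  have hvkp : v (k + p) = g * Real.sqrt ua := by
    rw [hv (k + p) hkp, hωkp, huadef, ← hadef, show a ^ 2 / (a * sA) = a / sA by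
      rw [pow_two, mul_div_mul_left _ _ ha0.ne']]
  -- √(ω k) = sB * √ub
  have hsqωk : Real.sqrt (ω k) = sB * Real.sqrt ub := by
    have hsq : (sB * Real.sqrt ub) ^ 2 = b * sB := by
      rw [mul_pow, Real.sq_sqrt hub0.le, hubdef]
      field_simp
    rw [hωk, ← hsq, Real.sqrt_sq (by positivity)]
  -- core estimate : |a*sB - b*sA| ≤ 5/2 * q * sA
  set d := a * sB - b * sA with hddef
  have hid : d * (a * sB + b * sA) = c ^ 2 * (a ^ 2 - b ^ 2) := by
    rw [hddef]
    linear_combination a ^ 2 * hsB2 - b ^ 2 * hsA2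
  have hcore : |d| ≤ 5 / 2 * q * sA := by
    have h1 : b ^ 2 * A ≤ (a * sB + b * sA) ^ 2 := by
      have hexp : (a * sB + b * sA) ^ 2 = a ^ 2 * B + 2 * (a * b) * (sA * sB) + b ^ 2 * A := by
        linear_combination a ^ 2 * hsB2 + b ^ 2 * hsA2
      have hn1 : 0 ≤ a ^ 2 * B := by positivity
      have hn2 : 0 ≤ 2 * (a * b) * (sA * sB) := by positivity
      linarith
    have h2 : d ^ 2 * (a * sB + b * sA) ^ 2 = c ^ 4 * ((a - b) * (a + b)) ^ 2 := by
      linear_combination (d * (a * sB + b * sA) + c ^ 2 * (a ^ 2 - b ^ 2)) * hid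
    have h3 : ((a - b) * (a + b)) ^ 2 ≤ (q * (5 * b / 2)) ^ 2 := by
      have hab2' : (a - b) ^ 2 ≤ q ^ 2 := sq_le_sq' hab1 hab2
      have hsum : (a + b) ^ 2 ≤ (5 * b / 2) ^ 2 :=
        pow_le_pow_left₀ (by linarith) (by linarith) 2
      calc ((a - b) * (a + b)) ^ 2 = (a - b) ^ 2 * (a + b) ^ 2 := by ring
        _ ≤ q ^ 2 * (5 * b / 2) ^ 2 := by
            apply mul_le_mul hab2' hsum (sq_nonneg _) (sq_nonneg _)
        _ = (q * (5 * b / 2)) ^ 2 := by ring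
    have h4 : d ^ 2 * (b ^ 2 * A) ≤ 25 / 4 * c ^ 4 * q ^ 2 * b ^ 2 := by
      calc d ^ 2 * (b ^ 2 * A) ≤ d ^ 2 * (a * sB + b * sA) ^ 2 := by
            exact mul_le_mul_of_nonneg_left h1 (sq_nonneg d)
        _ = c ^ 4 * ((a - b) * (a + b)) ^ 2 := h2
        _ ≤ c ^ 4 * (q * (5 * b / 2)) ^ 2 := by
            exact mul_le_mul_of_nonneg_left h3 (by positivity)
        _ = 25 / 4 * c ^ 4 * q ^ 2 * b ^ 2 := by ring
    have h5 : d ^ 2 ≤ 25 / 4 * q ^ 2 * A := by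
      have hcA2 : c ^ 4 ≤ A ^ 2 := by
        have hA' : c ^ 2 ≤ A := by
          rw [hAdef]; exact le_add_of_nonneg_right (by positivity)
        calc c ^ 4 = (c ^ 2) ^ 2 := by ring
          _ ≤ A ^ 2 := pow_le_pow_left₀ (sq_nonneg c) hA' 2
      have hstep : 25 / 4 * q ^ 2 * b ^ 2 * c ^ 4 ≤ 25 / 4 * q ^ 2 * b ^ 2 * A ^ 2 :=
        mul_le_mul_of_nonneg_left hcA2 (by positivity)
      have h6 : d ^ 2 * A * b ^ 2 ≤ 25 / 4 * q ^ 2 * A * A * b ^ 2 := by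
        have e1 : d ^ 2 * A * b ^ 2 = d ^ 2 * (b ^ 2 * A) := by ring
        have e2 : 25 / 4 * q ^ 2 * A * A * b ^ 2 = 25 / 4 * q ^ 2 * b ^ 2 * A ^ 2 := by ring
        rw [e1, e2]
        calc d ^ 2 * (b ^ 2 * A) ≤ 25 / 4 * c ^ 4 * q ^ 2 * b ^ 2 := h4
          _ = 25 / 4 * q ^ 2 * b ^ 2 * c ^ 4 := by ring
          _ ≤ 25 / 4 * q ^ 2 * b ^ 2 * A ^ 2 := hstep
      have h7' : d ^ 2 * A ≤ 25 / 4 * q ^ 2 * A * A :=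
        le_of_mul_le_mul_right (by linarith) (by positivity : (0:ℝ) < b ^ 2)
      have := le_of_mul_le_mul_right (by linarith [h7'] : d ^ 2 * A ≤ (25 / 4 * q ^ 2 * A) * A) hA
      linarith
    have h7 : (5 / 2 * q * sA) ^ 2 = 25 / 4 * q ^ 2 * A := by
      rw [mul_pow, mul_pow, hsA2]; ring
    calc |d| = Real.sqrt (d ^ 2) := (Real.sqrt_sq_eq_abs d).symm
      _ ≤ Real.sqrt ((5 / 2 * q * sA) ^ 2) := Real.sqrt_le_sqrt (by rw [h7]; exact h5)
      _ = 5 / 2 * q * sA := Real.sqrt_sq (by positivity)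
  -- |ua - ub| ≤ 5/2 * q / sB
  have hdiff : |ua - ub| ≤ 5 / 2 * q / sB := by
    have heq : ua - ub = d / (sA * sB) := by
      rw [huadef, hubdef, hddef]
      field_simp
    rw [heq, abs_div, abs_of_pos (show (0:ℝ) < sA * sB by positivity)]
    rw [div_le_div_iff₀ (by positivity) hsB0]
    calc |d| * sB ≤ (5 / 2 * q * sA) * sB := by
          exact mul_le_mul_of_nonneg_right hcore hsB0.le
      _ = 5 / 2 * q * (sA * sB) := by ring
  -- assemble
  have hmain : |v (k + p) - v k| ≤ 5 / 2 * g * q / Real.sqrt (ω k) := by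
    rw [hvkp, hvk, ← mul_sub, abs_mul, abs_of_nonneg hg, hsqωk]
    calc g * |Real.sqrt ua - Real.sqrt ub| ≤ g * (|ua - ub| / Real.sqrt ub) := by
          exact mul_le_mul_of_nonneg_left (aux_sqrt_lip hua0 hub0) hg
      _ ≤ g * ((5 / 2 * q / sB) / Real.sqrt ub) := by
          apply mul_le_mul_of_nonneg_left _ hg
          exact div_le_div_of_nonneg_right hdiff (Real.sqrt_pos.mpr hub0).le
      _ = 5 / 2 * g * q / (sB * Real.sqrt ub) := by
          field_simp
  calc |v (k + p) - v k| ≤ 5 / 2 * g * q / Real.sqrt (ω k) := hmain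
    _ ≤ (5 / 2 * g + 1) * q / Real.sqrt (ω k) := by
        apply div_le_div_of_nonneg_right ?_ ?_
        · linarith [hq0]
        · rw [hωk]; positivity
end

section
/- Fix constants c > 0, ξ > 0, g ≥ 0, define ω : ℝ³ → ℝ by ω(k) = √(c²‖k‖² + ξ²‖k‖⁴), and define v : ℝ³ → ℝ by v(k) = g·√(‖k‖²/ω(k)) for k ≠ 0 and v(0) = 0. Then there exists C > 0 (depending only on g, c, ξ) such that for every k ∈ ℝ³ with k ≠ 0 and every ℓ ∈ ℝ³ with ½‖k‖ ≤ ‖ℓ‖ ≤ (3/2)‖k‖, the function v is differentiable at ℓ and the operator norm of its derivative satisfies ‖Dv(ℓ)‖ ≤ C/√(ω(k)). -/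
lemma stmt_6_key (g c x y W : ℝ) (hg : 0 ≤ g) (hx : 0 < x) (hy : 0 < y) (hW : 0 < W)
    (hc : 0 < c) (hcy : c ≤ y ^ 2) (hWxy : W ≤ 2 * (x * y)) :
    g * (c ^ 2 / (y ^ 2 * y ^ 2) ^ 2 / (2 * (x ^ 2 / y ^ 2)) / (2 * (x / y))) * (2 * x ^ 2)
      ≤ (g + 1) / W := by
  have h1 : g * (c ^ 2 / (y ^ 2 * y ^ 2) ^ 2 / (2 * (x ^ 2 / y ^ 2)) / (2 * (x / y))) * (2 * x ^ 2)
      = g * c ^ 2 / (2 * x * y ^ 5) := by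
    field_simp
  rw [h1, div_le_div_iff₀ (by positivity) hW]
  have h2 : c ^ 2 ≤ (y ^ 2) ^ 2 := by nlinarith
  have h3 : g * c ^ 2 * W ≤ g * c ^ 2 * (2 * (x * y)) :=
    mul_le_mul_of_nonneg_left hWxy (by positivity)
  nlinarith [mul_pos hx (pow_pos hy 5),
    mul_le_mul_of_nonneg_right h2 (by positivity : (0:ℝ) ≤ g * (2 * (x * y)))]

set_option maxHeartbeats 1000000 in
set_option synthInstance.maxHeartbeats 400000 in
/-- Gradient bound `|∇v(ℓ)| ≤ C ω(k)^{−1/2}` for `½‖k‖ ≤ ‖ℓ‖ ≤ (3/2)‖k‖`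
asserted in the proof of Proposition 7: with `ω(k) = √(c²‖k‖² + ξ²‖k‖⁴)` and
`v(k) = g√(‖k‖²/ω(k))`, there is `C > 0` such that `v` is differentiable at each
such `ℓ` with `‖Dv(ℓ)‖ ≤ C/√(ω(k))`. -/
theorem stmt_6 (c ξ g : ℝ) (hc : 0 < c) (hξ : 0 < ξ) (hg : 0 ≤ g)
    (ω v : EuclideanSpace ℝ (Fin 3) → ℝ)
    (hω : ∀ k, ω k = Real.sqrt (c ^ 2 * ‖k‖ ^ 2 + ξ ^ 2 * ‖k‖ ^ 4))
    (hv : ∀ k, k ≠ 0 → v k = g * Real.sqrt (‖k‖ ^ 2 / ω k)) (hv0 : v 0 = 0) :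
    ∃ C > 0, ∀ k ℓ : EuclideanSpace ℝ (Fin 3), k ≠ 0 →
      ‖k‖ / 2 ≤ ‖ℓ‖ → ‖ℓ‖ ≤ 3 / 2 * ‖k‖ →
      DifferentiableAt ℝ v ℓ ∧ ‖fderiv ℝ v ℓ‖ ≤ C / Real.sqrt (ω k) := by
  have hveq : v = (fun t : ℝ => g * Real.sqrt (Real.sqrt (t / (c ^ 2 + ξ ^ 2 * t)))) ∘
      (fun x : EuclideanSpace ℝ (Fin 3) => ‖x‖ ^ 2) := by
    funext x
    rcases eq_or_ne x 0 with h | h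
    · simp [h, hv0]
    · have hxpos : 0 < ‖x‖ := norm_pos_iff.mpr h
      have hB : 0 < c ^ 2 + ξ ^ 2 * ‖x‖ ^ 2 := by positivity
      have hωx : ω x = ‖x‖ * Real.sqrt (c ^ 2 + ξ ^ 2 * ‖x‖ ^ 2) := by
        rw [hω x, show c ^ 2 * ‖x‖ ^ 2 + ξ ^ 2 * ‖x‖ ^ 4
            = ‖x‖ ^ 2 * (c ^ 2 + ξ ^ 2 * ‖x‖ ^ 2) by ring,
          Real.sqrt_mul (sq_nonneg _), Real.sqrt_sq (norm_nonneg _)]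
      show v x = g * Real.sqrt (Real.sqrt (‖x‖ ^ 2 / (c ^ 2 + ξ ^ 2 * ‖x‖ ^ 2)))
      rw [hv x h]
      congr 1
      congr 1
      rw [Real.sqrt_div (sq_nonneg _), Real.sqrt_sq (norm_nonneg x), hωx, sq,
        mul_div_mul_left _ _ hxpos.ne']
  refine ⟨g + 1, by positivity, fun k ℓ hk hk1 hk2 => ?_⟩
  have hK : 0 < ‖k‖ := norm_pos_iff.mpr hk
  have hr : 0 < ‖ℓ‖ := lt_of_lt_of_le (by positivity) hk1
  have hT : 0 < c ^ 2 + ξ ^ 2 * ‖ℓ‖ ^ 2 := by positivity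
  have hu : 0 < ‖ℓ‖ ^ 2 / (c ^ 2 + ξ ^ 2 * ‖ℓ‖ ^ 2) := by positivity
  have hsu : 0 < Real.sqrt (‖ℓ‖ ^ 2 / (c ^ 2 + ξ ^ 2 * ‖ℓ‖ ^ 2)) := Real.sqrt_pos.mpr hu
  have hq : HasDerivAt (fun t : ℝ => t / (c ^ 2 + ξ ^ 2 * t))
      (c ^ 2 / (c ^ 2 + ξ ^ 2 * ‖ℓ‖ ^ 2) ^ 2) (‖ℓ‖ ^ 2) := by
    have hden : HasDerivAt (fun t : ℝ => c ^ 2 + ξ ^ 2 * t) (ξ ^ 2) (‖ℓ‖ ^ 2) := by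
      simpa using ((hasDerivAt_id (‖ℓ‖ ^ 2)).const_mul (ξ ^ 2)).const_add (c ^ 2)
    have h := (hasDerivAt_id (‖ℓ‖ ^ 2)).div hden hT.ne'
    refine h.congr_deriv ?_
    simp only [id_eq]
    ring
  set d : ℝ := c ^ 2 / (c ^ 2 + ξ ^ 2 * ‖ℓ‖ ^ 2) ^ 2 /
      (2 * Real.sqrt (‖ℓ‖ ^ 2 / (c ^ 2 + ξ ^ 2 * ‖ℓ‖ ^ 2))) /
      (2 * Real.sqrt (Real.sqrt (‖ℓ‖ ^ 2 / (c ^ 2 + ξ ^ 2 * ‖ℓ‖ ^ 2)))) with hd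
  have hq3 : HasDerivAt (fun t : ℝ => Real.sqrt (Real.sqrt (t / (c ^ 2 + ξ ^ 2 * t)))) d
      (‖ℓ‖ ^ 2) := (hq.sqrt hu.ne').sqrt hsu.ne'
  have hψ : HasDerivAt (fun t : ℝ => g * Real.sqrt (Real.sqrt (t / (c ^ 2 + ξ ^ 2 * t))))
      (g * d) (‖ℓ‖ ^ 2) := hq3.const_mul g
  have hsqd : HasFDerivAt (fun x : EuclideanSpace ℝ (Fin 3) => ‖x‖ ^ 2)
      (2 • (innerSL ℝ ℓ)) ℓ := (hasStrictFDerivAt_norm_sq ℓ).hasFDerivAt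
  have hD : HasFDerivAt ((fun t : ℝ => g * Real.sqrt (Real.sqrt (t / (c ^ 2 + ξ ^ 2 * t)))) ∘
      (fun x : EuclideanSpace ℝ (Fin 3) => ‖x‖ ^ 2)) ((g * d) • (2 • (innerSL ℝ ℓ))) ℓ :=
    hψ.comp_hasFDerivAt ℓ hsqd
  rw [hveq]
  refine ⟨hD.differentiableAt, ?_⟩
  rw [hD.fderiv]
  have hd0 : 0 ≤ d := by rw [hd]; positivity
  have hgd : 0 ≤ g * d := mul_nonneg hg hd0
  have hnorm : ‖(g * d) • (2 • (innerSL ℝ ℓ))‖ ≤ g * d * (2 * ‖ℓ‖) := by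
    have h2 : ‖(2 : ℕ) • (innerSL ℝ ℓ)‖ ≤ 2 * ‖ℓ‖ := by
      rw [two_smul ℕ]
      calc ‖innerSL ℝ ℓ + innerSL ℝ ℓ‖ ≤ ‖innerSL ℝ ℓ‖ + ‖innerSL ℝ ℓ‖ := norm_add_le _ _
        _ = 2 * ‖ℓ‖ := by rw [innerSL_apply_norm]; ring
    calc ‖(g * d) • (2 • (innerSL ℝ ℓ))‖ ≤ ‖g * d‖ * ‖(2 : ℕ) • (innerSL ℝ ℓ)‖ :=
          norm_smul_le _ _
      _ ≤ ‖g * d‖ * (2 * ‖ℓ‖) := mul_le_mul_of_nonneg_left h2 (norm_nonneg _)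
      _ = g * d * (2 * ‖ℓ‖) := by rw [Real.norm_eq_abs, abs_of_nonneg hgd]
  obtain ⟨x, hx0, hx⟩ : ∃ x : ℝ, 0 < x ∧ x ^ 2 = ‖ℓ‖ :=
    ⟨Real.sqrt ‖ℓ‖, Real.sqrt_pos.mpr hr, Real.sq_sqrt hr.le⟩
  obtain ⟨y, hy0, hy⟩ : ∃ y : ℝ, 0 < y ∧ y ^ 2 = Real.sqrt (c ^ 2 + ξ ^ 2 * ‖ℓ‖ ^ 2) :=
    ⟨Real.sqrt (Real.sqrt (c ^ 2 + ξ ^ 2 * ‖ℓ‖ ^ 2)),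
      Real.sqrt_pos.mpr (Real.sqrt_pos.mpr hT), Real.sq_sqrt (Real.sqrt_nonneg _)⟩
  have hy4 : y ^ 2 * y ^ 2 = c ^ 2 + ξ ^ 2 * ‖ℓ‖ ^ 2 := by
    rw [hy]; exact Real.mul_self_sqrt hT.le
  have hsueq : Real.sqrt (‖ℓ‖ ^ 2 / (c ^ 2 + ξ ^ 2 * ‖ℓ‖ ^ 2)) = x ^ 2 / y ^ 2 := by
    rw [Real.sqrt_div (sq_nonneg _), Real.sqrt_sq (norm_nonneg ℓ), ← hy, ← hx]
  have hssueq : Real.sqrt (Real.sqrt (‖ℓ‖ ^ 2 / (c ^ 2 + ξ ^ 2 * ‖ℓ‖ ^ 2))) = x / y := by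
    rw [hsueq, Real.sqrt_div (sq_nonneg _), Real.sqrt_sq hx0.le, Real.sqrt_sq hy0.le]
  have hωk_pos : 0 < ω k := by
    rw [hω k]; exact Real.sqrt_pos.mpr (by positivity)
  have hW0 : 0 < Real.sqrt (ω k) := Real.sqrt_pos.mpr hωk_pos
  have hcy : c ≤ y ^ 2 := by
    rw [hy]
    calc c = Real.sqrt (c ^ 2) := (Real.sqrt_sq hc.le).symm
      _ ≤ _ := Real.sqrt_le_sqrt (by nlinarith)
  have hWxy : Real.sqrt (ω k) ≤ 2 * (x * y) := by
    have hK2r : ‖k‖ ≤ 2 * ‖ℓ‖ := by linarith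
    have h2 : ‖k‖ ^ 2 ≤ 4 * ‖ℓ‖ ^ 2 := by nlinarith [norm_nonneg k]
    have h4 : ‖k‖ ^ 4 ≤ 16 * ‖ℓ‖ ^ 4 := by nlinarith [norm_nonneg k, sq_nonneg (‖k‖ ^ 2)]
    have harg : c ^ 2 * ‖k‖ ^ 2 + ξ ^ 2 * ‖k‖ ^ 4
        ≤ 16 * ‖ℓ‖ ^ 2 * (c ^ 2 + ξ ^ 2 * ‖ℓ‖ ^ 2) := by
      nlinarith [mul_le_mul_of_nonneg_left h2 (sq_nonneg c),
        mul_le_mul_of_nonneg_left h4 (sq_nonneg ξ),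
        mul_nonneg (sq_nonneg c) (sq_nonneg ‖ℓ‖)]
    have h5 : ω k ≤ 4 * (‖ℓ‖ * Real.sqrt (c ^ 2 + ξ ^ 2 * ‖ℓ‖ ^ 2)) := by
      rw [hω k]
      have heq : (4 : ℝ) * (‖ℓ‖ * Real.sqrt (c ^ 2 + ξ ^ 2 * ‖ℓ‖ ^ 2))
          = Real.sqrt (16 * ‖ℓ‖ ^ 2 * (c ^ 2 + ξ ^ 2 * ‖ℓ‖ ^ 2)) := by
        rw [show (16 : ℝ) * ‖ℓ‖ ^ 2 * (c ^ 2 + ξ ^ 2 * ‖ℓ‖ ^ 2)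
            = (4 * ‖ℓ‖) ^ 2 * (c ^ 2 + ξ ^ 2 * ‖ℓ‖ ^ 2) by ring,
          Real.sqrt_mul (by positivity), Real.sqrt_sq (by positivity)]
        ring
      rw [heq]
      exact Real.sqrt_le_sqrt harg
    have h6 : (2 * (x * y)) ^ 2 = 4 * (‖ℓ‖ * Real.sqrt (c ^ 2 + ξ ^ 2 * ‖ℓ‖ ^ 2)) := by
      rw [show (2 * (x * y)) ^ 2 = 4 * (x ^ 2 * y ^ 2) by ring, hx, hy]
    calc Real.sqrt (ω k) ≤ Real.sqrt ((2 * (x * y)) ^ 2) :=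
          Real.sqrt_le_sqrt (by rw [h6]; exact h5)
      _ = 2 * (x * y) := Real.sqrt_sq (by positivity)
  calc ‖(g * d) • (2 • (innerSL ℝ ℓ))‖ ≤ g * d * (2 * ‖ℓ‖) := hnorm
    _ = g * (c ^ 2 / (y ^ 2 * y ^ 2) ^ 2 / (2 * (x ^ 2 / y ^ 2)) / (2 * (x / y)))
        * (2 * x ^ 2) := by rw [hd, hssueq, hsueq, ← hy4, ← hx]
    _ ≤ (g + 1) / Real.sqrt (ω k) :=
        stmt_6_key g c x y (Real.sqrt (ω k)) hg hx0 hy0 hW0 hc hcy hWxy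
end

section
/- Fix constants c > 0, ξ > 0 and g ≥ 0, define ω : ℝ³ → ℝ by ω(k) = √(c²‖k‖² + ξ²‖k‖⁴), and for Λ > 0 set Σ_Λ^{(1)} := −∫_{‖k‖ ≤ Λ} g²‖k‖² / (ω(k)·(½‖k‖² + ω(k))) dk (Lebesgue integral over the closed ball of radius Λ in ℝ³). Then Σ_Λ^{(1)}/Λ converges as Λ → ∞ to −4πg²/(ξ(ξ + ½)). -/
open MeasureTheory Filter Real Set Metric Topology

noncomputable section
namespace Stmt10Aux

variable (c ξ g : ℝ)

def Q (u : ℝ) : ℝ := Real.sqrt (c ^ 2 / u ^ 2 + ξ ^ 2)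

def G (u : ℝ) : ℝ := g ^ 2 / (Q c ξ u * (1 / 2 + Q c ξ u))

def F (t : ℝ) : ℝ :=
  g ^ 2 * t ^ 2 / (Real.sqrt (c ^ 2 * t ^ 2 + ξ ^ 2 * t ^ 4) *
    (1 / 2 * t ^ 2 + Real.sqrt (c ^ 2 * t ^ 2 + ξ ^ 2 * t ^ 4)))

variable {c ξ g}

lemma Q_ge (hξ : 0 < ξ) (u : ℝ) : ξ ≤ Q c ξ u := by
  calc ξ = Real.sqrt (ξ ^ 2) := (Real.sqrt_sq hξ.le).symm
  _ ≤ Q c ξ u := Real.sqrt_le_sqrt (le_add_of_nonneg_left (by positivity))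

lemma Q_pos (hξ : 0 < ξ) (u : ℝ) : 0 < Q c ξ u := lt_of_lt_of_le hξ (Q_ge hξ u)

lemma G_nonneg (hξ : 0 < ξ) (u : ℝ) : 0 ≤ G c ξ g u := by
  have h1 := Q_pos (c := c) hξ u
  have h2 : 0 < Q c ξ u * (1 / 2 + Q c ξ u) := by nlinarith
  exact div_nonneg (sq_nonneg g) h2.le

lemma G_le (hξ : 0 < ξ) (u : ℝ) : G c ξ g u ≤ g ^ 2 / (ξ * (1 / 2 + ξ)) := by
  have h1 := Q_ge (c := c) hξ u
  rw [G]
  exact div_le_div_of_nonneg_left (sq_nonneg g) (by positivity)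
    (by nlinarith)

lemma key (hc : 0 < c) (hξ : 0 < ξ) {u : ℝ} (hu : 0 < u) :
    u ^ 2 * F c ξ g u = G c ξ g u := by
  have hs4 : Real.sqrt (u ^ 4) = u ^ 2 := by
    rw [show u ^ 4 = (u ^ 2) ^ 2 by ring, Real.sqrt_sq (sq_nonneg u)]
  have hfact : c ^ 2 * u ^ 2 + ξ ^ 2 * u ^ 4 = u ^ 4 * (c ^ 2 / u ^ 2 + ξ ^ 2) := by
    field_simp
  have hsq : Real.sqrt (c ^ 2 * u ^ 2 + ξ ^ 2 * u ^ 4) = u ^ 2 * Q c ξ u := by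
    rw [hfact, Real.sqrt_mul (by positivity), hs4, Q]
  have hQ := Q_pos (c := c) hξ u
  rw [F, G, hsq]
  have h2 : (0:ℝ) < 1 / 2 + Q c ξ u := by linarith
  field_simp

lemma G_tendsto (hξ : 0 < ξ) {t : ℝ} (ht : 0 < t) :
    Tendsto (fun Λ : ℝ => G c ξ g (Λ * t)) atTop (𝓝 (g ^ 2 / (ξ * (1 / 2 + ξ)))) := by
  have hu : Tendsto (fun Λ : ℝ => Λ * t) atTop atTop :=
    Tendsto.atTop_mul_const ht tendsto_id
  have h0 : Tendsto (fun u : ℝ => c ^ 2 / u ^ 2) atTop (𝓝 0) :=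
    Tendsto.div_atTop tendsto_const_nhds (tendsto_pow_atTop two_ne_zero)
  have hQt : Tendsto (fun u : ℝ => Q c ξ u) atTop (𝓝 ξ) := by
    have : Tendsto (fun u : ℝ => c ^ 2 / u ^ 2 + ξ ^ 2) atTop (𝓝 (0 + ξ ^ 2)) :=
      h0.add tendsto_const_nhds
    rw [zero_add] at this
    have := (Real.continuous_sqrt.continuousAt (x := ξ ^ 2)).tendsto.comp this
    rwa [Real.sqrt_sq hξ.le] at this
  have hne : ξ * (1 / 2 + ξ) ≠ 0 := by positivity
  have hGt : Tendsto (fun u : ℝ => G c ξ g u) atTop (𝓝 (g ^ 2 / (ξ * (1 / 2 + ξ)))) :=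
    Tendsto.div tendsto_const_nhds (hQt.mul (tendsto_const_nhds.add hQt)) hne
  exact hGt.comp hu

lemma G_meas (Λ : ℝ) : Measurable (fun t : ℝ => G c ξ g (Λ * t)) := by
  have hQm : Measurable (fun u : ℝ => Q c ξ u) :=
    Real.continuous_sqrt.measurable.comp
      ((measurable_const.div (measurable_id.pow_const 2)).add measurable_const)
  have hGm : Measurable (fun u : ℝ => G c ξ g u) :=
    measurable_const.div (hQm.mul (measurable_const.add hQm))
  exact hGm.comp (measurable_id.const_mul Λ)

lemma dct (hξ : 0 < ξ) :
    Tendsto (fun Λ : ℝ => ∫ t in Ioc (0:ℝ) 1, G c ξ g (Λ * t)) atTop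
      (𝓝 (g ^ 2 / (ξ * (1 / 2 + ξ)))) := by
  have hconst : ∫ (_ : ℝ) in Ioc (0:ℝ) 1, g ^ 2 / (ξ * (1 / 2 + ξ)) =
      g ^ 2 / (ξ * (1 / 2 + ξ)) := by
    rw [setIntegral_const, Real.volume_real_Ioc, sub_zero, max_eq_left zero_le_one,
      one_smul]
  rw [← hconst]
  refine tendsto_integral_filter_of_dominated_convergence
    (fun _ => g ^ 2 / (ξ * (1 / 2 + ξ)))
    (Eventually.of_forall fun Λ => (G_meas Λ).aestronglyMeasurable)
    (Eventually.of_forall fun Λ => ae_of_all _ fun t => ?_)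
    ?_
    ((ae_restrict_mem measurableSet_Ioc).mono fun t ht => G_tendsto hξ ht.1)
  · rw [Real.norm_eq_abs, abs_of_nonneg (G_nonneg hξ _)]
    exact G_le hξ _
  · exact integrableOn_const measure_Ioc_lt_top.ne

lemma vol_ball3 : (volume (Metric.ball (0 : EuclideanSpace ℝ (Fin 3)) 1)).toReal = 4 * π / 3 := by
  rw [EuclideanSpace.volume_ball]
  have h3 : (Fintype.card (Fin 3)) = 3 := by simp
  rw [h3]
  have h52 : ((3 : ℕ) : ℝ) / 2 + 1 = 3 / 2 + 1 := by norm_num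
  have hG : Real.Gamma ((3 : ℕ) / 2 + 1) = 3 * Real.sqrt π / 4 := by
    rw [h52, Real.Gamma_add_one (by norm_num)]
    have : (3 : ℝ) / 2 = 1 / 2 + 1 := by norm_num
    rw [this, Real.Gamma_add_one (by norm_num), Real.Gamma_one_half_eq]
    ring
  rw [hG]
  have hs : Real.sqrt π ^ 3 / (3 * Real.sqrt π / 4) = 4 * π / 3 := by
    have hπ : Real.sqrt π > 0 := Real.sqrt_pos.2 Real.pi_pos
    have h2 : Real.sqrt π ^ 3 = π * Real.sqrt π := by
      rw [pow_succ, Real.sq_sqrt Real.pi_pos.le]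
    rw [h2]
    field_simp
  rw [hs, ENNReal.ofReal_one, one_pow, one_mul, ENNReal.toReal_ofReal (by positivity)]

end Stmt10Aux

open Stmt10Aux in
/-- Linear divergence of the first counterterm: with
`ω(k) = √(c²‖k‖² + ξ²‖k‖⁴)` and
`Σ_Λ^{(1)} = −∫_{‖k‖≤Λ} g²‖k‖²/(ω(k)(½‖k‖² + ω(k))) dk`, one has
`Σ_Λ^{(1)}/Λ → −4πg²/(ξ(ξ + ½))` as `Λ → ∞`. -/
theorem stmt_10 (c ξ g : ℝ) (hc : 0 < c) (hξ : 0 < ξ) (hg : 0 ≤ g)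
    (ω : EuclideanSpace ℝ (Fin 3) → ℝ)
    (hω : ∀ k, ω k = Real.sqrt (c ^ 2 * ‖k‖ ^ 2 + ξ ^ 2 * ‖k‖ ^ 4))
    (S₁ : ℝ → ℝ)
    (hS₁ : ∀ Λ : ℝ, 0 < Λ →
      S₁ Λ = -∫ k in Metric.closedBall (0 : EuclideanSpace ℝ (Fin 3)) Λ,
        g ^ 2 * ‖k‖ ^ 2 / (ω k * ((1 : ℝ) / 2 * ‖k‖ ^ 2 + ω k))) :
    Tendsto (fun Λ : ℝ => S₁ Λ / Λ) atTop
      (nhds (-(4 * π * g ^ 2 / (ξ * (ξ + 1 / 2))))) := by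
  have hmain : ∀ Λ : ℝ, 0 < Λ →
      S₁ Λ / Λ = -(4 * π) * ∫ t in Ioc (0:ℝ) 1, G c ξ g (Λ * t) := by
    intro Λ hΛ
    have h1 : (fun k : EuclideanSpace ℝ (Fin 3) =>
        g ^ 2 * ‖k‖ ^ 2 / (ω k * ((1 : ℝ) / 2 * ‖k‖ ^ 2 + ω k))) =
        fun k : EuclideanSpace ℝ (Fin 3) => F c ξ g ‖k‖ := by
      funext k; rw [hω]; rfl
    -- Step B: indicator of norm
    have h2 : ∫ k in Metric.closedBall (0 : EuclideanSpace ℝ (Fin 3)) Λ, F c ξ g ‖k‖ =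
        ∫ k : EuclideanSpace ℝ (Fin 3), (Set.indicator (Iic Λ) (F c ξ g)) ‖k‖ := by
      rw [← integral_indicator measurableSet_closedBall]
      congr 1
      funext k
      by_cases h : ‖k‖ ≤ Λ <;>
        simp [Set.indicator_apply, mem_closedBall_zero_iff, Set.mem_Iic, h]
    -- Step C: polar coordinates
    have h3 : ∫ k : EuclideanSpace ℝ (Fin 3), (Set.indicator (Iic Λ) (F c ξ g)) ‖k‖ =
        (4 * π / 3) * (3 * ∫ y in Ioi (0:ℝ), y ^ 2 * (Set.indicator (Iic Λ) (F c ξ g)) y) := by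
      rw [MeasureTheory.integral_fun_norm_addHaar volume (Set.indicator (Iic Λ) (F c ξ g))]
      simp only [finrank_euclideanSpace_fin, measureReal_def, vol_ball3, nsmul_eq_mul, smul_eq_mul,
        show (3:ℕ) - 1 = 2 from rfl, Nat.cast_ofNat]
      ring
    -- Step D
    have h4 : ∫ y in Ioi (0:ℝ), y ^ 2 * (Set.indicator (Iic Λ) (F c ξ g)) y =
        ∫ y in Ioc (0:ℝ) Λ, y ^ 2 * F c ξ g y := by
      have : (fun y : ℝ => y ^ 2 * (Set.indicator (Iic Λ) (F c ξ g)) y) =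
          fun y => Set.indicator (Iic Λ) (fun y => y ^ 2 * F c ξ g y) y := by
        funext y
        by_cases h : y ∈ Iic Λ <;> simp [Set.indicator_apply, h]
      rw [this, setIntegral_indicator measurableSet_Iic, Set.Ioi_inter_Iic]
    -- Step E: scaling substitution
    have h5 : ∫ y in Ioc (0:ℝ) Λ, y ^ 2 * F c ξ g y =
        Λ * ∫ t in Ioc (0:ℝ) 1, (Λ * t) ^ 2 * F c ξ g (Λ * t) := by
      have hmem : ∀ x : ℝ, (Λ * x ∈ Ioc (0:ℝ) Λ ↔ x ∈ Ioc (0:ℝ) 1) := by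
        intro x
        simp only [Set.mem_Ioc]
        constructor
        · rintro ⟨hp, hb⟩
          refine ⟨by nlinarith, by nlinarith⟩
        · rintro ⟨hp, hb⟩
          exact ⟨mul_pos hΛ hp, by nlinarith⟩
      have hcomp := MeasureTheory.Measure.integral_comp_mul_left
        (Set.indicator (Ioc (0:ℝ) Λ) (fun y => y ^ 2 * F c ξ g y)) Λ
      have hind : (fun x : ℝ => Set.indicator (Ioc (0:ℝ) Λ)
          (fun y => y ^ 2 * F c ξ g y) (Λ * x)) =
          fun x => Set.indicator (Ioc (0:ℝ) 1)
            (fun x => (Λ * x) ^ 2 * F c ξ g (Λ * x)) x := by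
        funext x
        by_cases h : x ∈ Ioc (0:ℝ) 1
        · rw [Set.indicator_of_mem ((hmem x).2 h), Set.indicator_of_mem h]
        · rw [Set.indicator_of_notMem (fun hh => h ((hmem x).1 hh)),
            Set.indicator_of_notMem h]
      rw [hind, abs_of_pos (inv_pos.2 hΛ), smul_eq_mul] at hcomp
      rw [← integral_indicator measurableSet_Ioc, ← integral_indicator measurableSet_Ioc,
        hcomp, ← mul_assoc, mul_inv_cancel₀ hΛ.ne', one_mul]
    -- Step F
    have h6 : ∫ t in Ioc (0:ℝ) 1, (Λ * t) ^ 2 * F c ξ g (Λ * t) =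
        ∫ t in Ioc (0:ℝ) 1, G c ξ g (Λ * t) := by
      refine setIntegral_congr_fun measurableSet_Ioc fun t ht => ?_
      exact key hc hξ (mul_pos hΛ ht.1)
    rw [hS₁ Λ hΛ, h1, h2, h3, h4, h5, h6]
    field_simp
  have hlim := (dct (c := c) (g := g) hξ).const_mul (-(4 * π))
  have heq : -(4 * π) * (g ^ 2 / (ξ * (1 / 2 + ξ))) = -(4 * π * g ^ 2 / (ξ * (ξ + 1 / 2))) := by
    ring
  rw [heq] at hlim
  refine hlim.congr' ?_
  filter_upwards [eventually_gt_atTop (0:ℝ)] with Λ hΛ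
  exact (hmain Λ hΛ).symm
end
end

section
/- Fix constants c > 0, ξ > 0, g ≥ 0, define ω : ℝ³ → ℝ by ω(k) = √(c²‖k‖² + ξ²‖k‖⁴), and fix P, p ∈ ℝ³, η ≥ 0 and μ > 0. For Λ > 0 define I(Λ) := ∫_{‖k‖ ≤ Λ} (g²‖k‖²/ω(k)) · ( 1/(½‖P − p − k‖² + η + ω(k) + μ) − 1/(½‖k‖² + ω(k)) ) dk, the Lebesgue integral over the closed ball of radius Λ in ℝ³ (the integrand being extended by 0 at k = 0). Then there exists a real number L such that I(Λ) → L as Λ → ∞. -/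
open MeasureTheory Filter

noncomputable section
namespace Stmt11Aux

abbrev E3 := EuclideanSpace ℝ (Fin 3)

def om (c ξ : ℝ) (k : E3) : ℝ := Real.sqrt (c ^ 2 * ‖k‖ ^ 2 + ξ ^ 2 * ‖k‖ ^ 4)

def Fi (c ξ g η μ : ℝ) (q k : E3) : ℝ :=
  g ^ 2 * ‖k‖ ^ 2 / om c ξ k *
    (1 / (1 / 2 * ‖q - k‖ ^ 2 + η + om c ξ k + μ) - 1 / (1 / 2 * ‖k‖ ^ 2 + om c ξ k))

def Gi (c ξ g η μ : ℝ) (q k : E3) : ℝ :=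
  (Fi c ξ g η μ q k + Fi c ξ g η μ q (-k)) / 2

variable {c ξ g η μ : ℝ} {q k : E3}

lemma om_nonneg : 0 ≤ om c ξ k := Real.sqrt_nonneg _

lemma om_neg : om c ξ (-k) = om c ξ k := by simp [om]

lemma om_ge_c (hc : 0 < c) : c * ‖k‖ ≤ om c ξ k := by
  have h : (c * ‖k‖) ^ 2 ≤ c ^ 2 * ‖k‖ ^ 2 + ξ ^ 2 * ‖k‖ ^ 4 := by
    have h0 : (0:ℝ) ≤ ξ ^ 2 * ‖k‖ ^ 4 := by positivity
    nlinarith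
  calc c * ‖k‖ = Real.sqrt ((c * ‖k‖) ^ 2) := (Real.sqrt_sq (by positivity)).symm
    _ ≤ om c ξ k := Real.sqrt_le_sqrt h

lemma om_ge_xi (hξ : 0 < ξ) : ξ * ‖k‖ ^ 2 ≤ om c ξ k := by
  have h : (ξ * ‖k‖ ^ 2) ^ 2 ≤ c ^ 2 * ‖k‖ ^ 2 + ξ ^ 2 * ‖k‖ ^ 4 := by
    have h0 : (0:ℝ) ≤ c ^ 2 * ‖k‖ ^ 2 := by positivity
    nlinarith
  calc ξ * ‖k‖ ^ 2 = Real.sqrt ((ξ * ‖k‖ ^ 2) ^ 2) := (Real.sqrt_sq (by positivity)).symm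
    _ ≤ om c ξ k := Real.sqrt_le_sqrt h

lemma om_le (hc : 0 < c) (hξ : 0 < ξ) : om c ξ k ≤ c * ‖k‖ + ξ * ‖k‖ ^ 2 := by
  have h : c ^ 2 * ‖k‖ ^ 2 + ξ ^ 2 * ‖k‖ ^ 4 ≤ (c * ‖k‖ + ξ * ‖k‖ ^ 2) ^ 2 := by
    have : 0 ≤ c * ‖k‖ * (ξ * ‖k‖ ^ 2) := by positivity
    nlinarith [this]
  calc om c ξ k ≤ Real.sqrt ((c * ‖k‖ + ξ * ‖k‖ ^ 2) ^ 2) := Real.sqrt_le_sqrt h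
    _ = c * ‖k‖ + ξ * ‖k‖ ^ 2 := Real.sqrt_sq (by positivity)

lemma Fi_measurable : Measurable (Fi c ξ g η μ q) := by
  unfold Fi om; fun_prop

lemma abs_Fi_le (hc : 0 < c) (hξ : 0 < ξ) (hη : 0 ≤ η) (hμ : 0 < μ) :
    |Fi c ξ g η μ q k| ≤ g ^ 2 / (ξ * μ) + g ^ 2 / c ^ 2 := by
  rcases eq_or_ne k 0 with rfl | hk
  · have h0 : Fi c ξ g η μ q 0 = 0 := by simp [Fi]
    rw [h0, abs_zero]; positivity
  · have hn : 0 < ‖k‖ := norm_pos_iff.2 hk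
    set n := ‖k‖ with hndef
    set w := om c ξ k with hwdef
    have hw1 : c * n ≤ w := om_ge_c hc
    have hw2 : ξ * n ^ 2 ≤ w := om_ge_xi hξ
    have hwpos : 0 < w := lt_of_lt_of_le (by positivity) hw1
    set d1 := 1 / 2 * ‖q - k‖ ^ 2 + η + w + μ with hd1def
    set e := 1 / 2 * n ^ 2 + w with hedef
    have hFi : Fi c ξ g η μ q k = g ^ 2 * n ^ 2 / w * (1 / d1 - 1 / e) := rfl
    clear_value n w d1 e
    have hd1mu : μ ≤ d1 := by
      have := sq_nonneg ‖q - k‖; rw [hd1def]; nlinarith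
    have hd1pos : 0 < d1 := lt_of_lt_of_le hμ hd1mu
    have hepos : 0 < e := by rw [hedef]; positivity
    have habs : |1 / d1 - 1 / e| ≤ 1 / d1 + 1 / e := by
      have h1 : 0 < 1 / d1 := by positivity
      have h2 : 0 < 1 / e := by positivity
      rw [abs_le]; constructor <;> linarith
    have hA : (0:ℝ) ≤ g ^ 2 * n ^ 2 / w := by positivity
    have key : |Fi c ξ g η μ q k| ≤ g ^ 2 * n ^ 2 / w * (1 / d1 + 1 / e) := by
      rw [hFi, abs_mul, abs_of_nonneg hA]
      exact mul_le_mul_of_nonneg_left habs hA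
    have ht1 : g ^ 2 * n ^ 2 / w * (1 / d1) ≤ g ^ 2 / (ξ * μ) := by
      have h1 : g ^ 2 * n ^ 2 / w ≤ g ^ 2 / ξ := by
        rw [div_le_div_iff₀ hwpos hξ]; nlinarith [sq_nonneg g]
      have h2 : 1 / d1 ≤ 1 / μ := one_div_le_one_div_of_le hμ hd1mu
      calc g ^ 2 * n ^ 2 / w * (1 / d1) ≤ g ^ 2 / ξ * (1 / μ) :=
            mul_le_mul h1 h2 (by positivity) (by positivity)
        _ = g ^ 2 / (ξ * μ) := by rw [div_mul_div_comm, mul_one]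
    have ht2 : g ^ 2 * n ^ 2 / w * (1 / e) ≤ g ^ 2 / c ^ 2 := by
      have heq : g ^ 2 * n ^ 2 / w * (1 / e) = g ^ 2 * n ^ 2 / (w * e) := by
        rw [div_mul_div_comm, mul_one]
      rw [heq, div_le_div_iff₀ (by positivity) (by positivity)]
      have hwe : c ^ 2 * n ^ 2 ≤ w * e := by
        have h1 : c * n * (c * n) ≤ w * w :=
          mul_le_mul hw1 hw1 (by positivity) hwpos.le
        have h2 : (0:ℝ) ≤ w * (1 / 2 * n ^ 2) := by positivity
        have h3 : w * e = w * (1 / 2 * n ^ 2) + w * w := by rw [hedef]; ring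
        nlinarith
      nlinarith [sq_nonneg g]
    calc |Fi c ξ g η μ q k| ≤ g ^ 2 * n ^ 2 / w * (1 / d1 + 1 / e) := key
      _ = g ^ 2 * n ^ 2 / w * (1 / d1) + g ^ 2 * n ^ 2 / w * (1 / e) := by ring
      _ ≤ g ^ 2 / (ξ * μ) + g ^ 2 / c ^ 2 := add_le_add ht1 ht2


set_option maxHeartbeats 1000000 in
lemma exists_bound (hc : 0 < c) (hξ : 0 < ξ) (hη : 0 ≤ η) (hμ : 0 < μ) (q : E3) :
    ∃ C : ℝ, 0 ≤ C ∧ ∀ k : E3, |Gi c ξ g η μ q k| ≤ C * (1 + ‖k‖) ^ (-(4 : ℝ)) := by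
  obtain ⟨M, hM0, hM⟩ : ∃ M : ℝ, 0 ≤ M ∧ ∀ k : E3, |Fi c ξ g η μ q k| ≤ M :=
    ⟨g ^ 2 / (ξ * μ) + g ^ 2 / c ^ 2, by positivity, fun k => abs_Fi_le hc hξ hη hμ⟩
  set a := 1 / 2 * ‖q‖ ^ 2 + η + μ with hadef
  have ha0 : 0 < a := by rw [hadef]; positivity
  set R := max 1 (2 * ‖q‖) with hRdef
  have hR1 : (1 : ℝ) ≤ R := le_max_left _ _
  have hR0 : (0 : ℝ) ≤ R := by linarith only [hR1]
  set C₁ := ‖q‖ ^ 2 + a * (1 / 2 + c + ξ + a) with hC₁def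
  have hC₁0 : 0 ≤ C₁ := by rw [hC₁def]; positivity
  set Cb := g ^ 2 / ξ * C₁ * 128 with hCbdef
  have hCb0 : 0 ≤ Cb := by rw [hCbdef]; positivity
  clear_value a R C₁ Cb
  refine ⟨max (M * (1 + R) ^ 4) (16 * Cb), le_max_iff.2 (Or.inl (by positivity)), fun k => ?_⟩
  set C := max (M * (1 + R) ^ 4) (16 * Cb) with hCdef
  have hC0 : 0 ≤ C := le_max_iff.2 (Or.inl (by positivity))
  have hn0 : (0 : ℝ) ≤ ‖k‖ := norm_nonneg k
  have hrpow : (1 + ‖k‖ : ℝ) ^ (-(4 : ℝ)) = ((1 + ‖k‖) ^ (4 : ℕ))⁻¹ := by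
    rw [← Real.rpow_natCast (1 + ‖k‖) 4, ← Real.rpow_neg (by positivity)]
    norm_num
  rw [hrpow, ← div_eq_mul_inv, le_div_iff₀ (by positivity)]
  rcases le_or_gt ‖k‖ R with hkR | hkR
  · have hGiM : |Gi c ξ g η μ q k| ≤ M := by
      have h3 : Gi c ξ g η μ q k = (Fi c ξ g η μ q k + Fi c ξ g η μ q (-k)) / 2 := rfl
      rw [h3, abs_div, abs_two]
      have h4 := abs_add_le (Fi c ξ g η μ q k) (Fi c ξ g η μ q (-k))
      linarith only [hM k, hM (-k), h4]
    calc |Gi c ξ g η μ q k| * (1 + ‖k‖) ^ 4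
        ≤ M * (1 + R) ^ 4 :=
          mul_le_mul hGiM (pow_le_pow_left₀ (by positivity) (by linarith only [hkR]) 4)
            (by positivity) hM0
      _ ≤ C := by rw [hCdef]; exact le_max_left _ _
  · have hn1 : (1 : ℝ) ≤ ‖k‖ := le_trans hR1 hkR.le
    have hq2 : 2 * ‖q‖ ≤ ‖k‖ := by
      have hRq : 2 * ‖q‖ ≤ R := by rw [hRdef]; exact le_max_right _ _
      linarith only [hRq, hkR]
    have hnpos : (0 : ℝ) < ‖k‖ := by linarith only [hn1]
    have hq0 : (0 : ℝ) ≤ ‖q‖ := norm_nonneg q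
    set n := ‖k‖ with hndef
    set w := om c ξ k with hwdef
    set t := (inner ℝ q k : ℝ) with htdef
    set e := 1 / 2 * n ^ 2 + w with hedef
    set dp := e + a - t with hdpdef
    set dm := e + a + t with hdmdef
    have hw0 : 0 ≤ w := by rw [hwdef]; exact om_nonneg
    have hwge : c * n ≤ w := by rw [hwdef, hndef]; exact om_ge_c hc
    have hwxi : ξ * n ^ 2 ≤ w := by rw [hwdef, hndef]; exact om_ge_xi hξ
    have hwle : w ≤ c * n + ξ * n ^ 2 := by rw [hwdef, hndef]; exact om_le hc hξ
    have hwpos : 0 < w := lt_of_lt_of_le (by positivity) hwge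
    have ht : |t| ≤ ‖q‖ * n := by rw [htdef, hndef]; exact abs_real_inner_le_norm q k
    have hsub : ‖q - k‖ ^ 2 = ‖q‖ ^ 2 - 2 * t + n ^ 2 := by
      rw [htdef, hndef]; exact norm_sub_sq_real q k
    have hadd : ‖q + k‖ ^ 2 = ‖q‖ ^ 2 + 2 * t + n ^ 2 := by
      rw [htdef, hndef]; exact norm_add_sq_real q k
    have hqk : n - ‖q‖ ≤ ‖q - k‖ := by
      rw [hndef]
      calc ‖k‖ - ‖q‖ ≤ ‖k - q‖ := norm_sub_norm_le k q
        _ = ‖q - k‖ := norm_sub_rev k q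
    have hqk' : n - ‖q‖ ≤ ‖q + k‖ := by
      rw [hndef]
      have h := norm_sub_norm_le k (-q)
      simp only [norm_neg, sub_neg_eq_add] at h
      calc ‖k‖ - ‖q‖ ≤ ‖k + q‖ := h
        _ = ‖q + k‖ := by rw [add_comm]
    have hFik : Fi c ξ g η μ q k = g ^ 2 * n ^ 2 / w * (1 / dp - 1 / e) := by
      unfold Fi
      rw [← hwdef, ← hndef]
      have h1 : 1 / 2 * ‖q - k‖ ^ 2 + η + w + μ = dp := by
        rw [hdpdef, hedef, hadef, hsub]; ring
      rw [h1, ← hedef]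
    have hFimk : Fi c ξ g η μ q (-k) = g ^ 2 * n ^ 2 / w * (1 / dm - 1 / e) := by
      unfold Fi
      rw [norm_neg, sub_neg_eq_add, om_neg, ← hwdef, ← hndef]
      have h1 : 1 / 2 * ‖q + k‖ ^ 2 + η + w + μ = dm := by
        rw [hdmdef, hedef, hadef, hadd]; ring
      rw [h1, ← hedef]
    clear_value n w t e dp dm
    have helow : n ^ 2 / 2 ≤ e := by rw [hedef]; linarith only [hw0]
    have hepos : 0 < e := lt_of_lt_of_le (by positivity) helow
    have hdp_eq : dp = 1 / 2 * ‖q - k‖ ^ 2 + η + w + μ := by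
      rw [hdpdef, hedef, hadef, hsub]; ring
    have hdm_eq : dm = 1 / 2 * ‖q + k‖ ^ 2 + η + w + μ := by
      rw [hdmdef, hedef, hadef, hadd]; ring
    have h5 : n / 2 ≤ ‖q - k‖ := by linarith only [hqk, hq2]
    have h5' : n / 2 ≤ ‖q + k‖ := by linarith only [hqk', hq2]
    have h6 : n ^ 2 / 4 ≤ ‖q - k‖ ^ 2 := by
      have h := mul_self_le_mul_self (by positivity : (0:ℝ) ≤ n / 2) h5
      nlinarith only [h]
    have h6' : n ^ 2 / 4 ≤ ‖q + k‖ ^ 2 := by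
      have h := mul_self_le_mul_self (by positivity : (0:ℝ) ≤ n / 2) h5'
      nlinarith only [h]
    have hdplow : n ^ 2 / 8 ≤ dp := by
      rw [hdp_eq]; linarith only [h6, hη, hw0, hμ]
    have hdmlow : n ^ 2 / 8 ≤ dm := by
      rw [hdm_eq]; linarith only [h6', hη, hw0, hμ]
    have hdppos : 0 < dp := lt_of_lt_of_le (by positivity) hdplow
    have hdmpos : 0 < dm := lt_of_lt_of_le (by positivity) hdmlow
    have hGid : Gi c ξ g η μ q k
        = g ^ 2 * n ^ 2 / w * ((t ^ 2 - a * (e + a)) / (e * dp * dm)) := by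
      have hgid0 : Gi c ξ g η μ q k
          = (Fi c ξ g η μ q k + Fi c ξ g η μ q (-k)) / 2 := rfl
      rw [hgid0, hFik, hFimk, hdpdef, hdmdef]
      have hw' : w ≠ 0 := ne_of_gt hwpos
      have he' : e ≠ 0 := ne_of_gt hepos
      have hdp' : e + a - t ≠ 0 := by rw [← hdpdef]; exact ne_of_gt hdppos
      have hdm' : e + a + t ≠ 0 := by rw [← hdmdef]; exact ne_of_gt hdmpos
      field_simp
      ring
    have habsGi : |Gi c ξ g η μ q k|
        = g ^ 2 * n ^ 2 / w * (|t ^ 2 - a * (e + a)| / (e * dp * dm)) := by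
      rw [hGid, abs_mul, abs_div, abs_div,
        abs_of_nonneg (by positivity : (0:ℝ) ≤ g ^ 2 * n ^ 2),
        abs_of_pos hwpos, abs_of_pos (by positivity : (0:ℝ) < e * dp * dm)]
    have ht2 : t ^ 2 ≤ ‖q‖ ^ 2 * n ^ 2 := by
      have h := mul_self_le_mul_self (abs_nonneg t) ht
      nlinarith only [h, sq_abs t]
    have hn2 : (1:ℝ) ≤ n ^ 2 := by nlinarith only [hn1, hn0]
    have hnn : n ≤ n ^ 2 := by nlinarith only [hn1, hn0]
    have hea : e + a ≤ (1 / 2 + c + ξ + a) * n ^ 2 := by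
      have e1 : c * n ≤ c * n ^ 2 := mul_le_mul_of_nonneg_left hnn hc.le
      have e2 : a ≤ a * n ^ 2 := by nlinarith only [mul_le_mul_of_nonneg_left hn2 ha0.le]
      rw [hedef]
      nlinarith only [hwle, e1, e2]
    have heapos : 0 < e + a := by linarith only [helow, ha0, sq_nonneg n]
    have hnum : |t ^ 2 - a * (e + a)| ≤ C₁ * n ^ 2 := by
      have h7 : 0 ≤ a * (e + a) := by positivity
      have h8 : a * (e + a) ≤ a * ((1 / 2 + c + ξ + a) * n ^ 2) :=
        mul_le_mul_of_nonneg_left hea ha0.le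
      have h8' : (0:ℝ) ≤ a * ((1 / 2 + c + ξ + a) * n ^ 2) := le_trans h7 h8
      have h9 : (0:ℝ) ≤ ‖q‖ * ‖q‖ * (n * n) :=
        mul_nonneg (mul_nonneg hq0 hq0) (mul_nonneg hn0 hn0)
      have h10 : a * ((1 / 2 + c + ξ + a) * n ^ 2) ≤ C₁ * n ^ 2 := by
        rw [hC₁def]; nlinarith only [h9]
      rw [abs_le]
      constructor
      · nlinarith only [h8, h10, sq_nonneg t]
      · rw [hC₁def]; nlinarith only [ht2, h7, h8', h9]
    have hden : n ^ 6 / 128 ≤ e * dp * dm := by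
      have h8 : n ^ 2 / 2 * (n ^ 2 / 8) * (n ^ 2 / 8) ≤ e * dp * dm := by
        gcongr <;> positivity
      calc n ^ 6 / 128 = n ^ 2 / 2 * (n ^ 2 / 8) * (n ^ 2 / 8) := by ring
        _ ≤ e * dp * dm := h8
    have hfrac : |t ^ 2 - a * (e + a)| / (e * dp * dm) ≤ C₁ * n ^ 2 / (n ^ 6 / 128) :=
      div_le_div₀ (by positivity) hnum (by positivity) hden
    have hvsq : g ^ 2 * n ^ 2 / w ≤ g ^ 2 / ξ := by
      rw [div_le_div_iff₀ hwpos hξ]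
      nlinarith only [mul_le_mul_of_nonneg_left hwxi (sq_nonneg g)]
    have hGi2 : |Gi c ξ g η μ q k| ≤ g ^ 2 / ξ * (C₁ * n ^ 2 / (n ^ 6 / 128)) := by
      rw [habsGi]
      exact mul_le_mul hvsq hfrac (by positivity) (by positivity)
    have heq2 : g ^ 2 / ξ * (C₁ * n ^ 2 / (n ^ 6 / 128)) = Cb / n ^ 4 := by
      rw [hCbdef]
      have hn' : n ≠ 0 := ne_of_gt hnpos
      field_simp
    have hpow : (1 + n) ^ 4 ≤ 16 * n ^ 4 := by
      have h9 := pow_le_pow_left₀ (by positivity : (0:ℝ) ≤ 1 + n)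
        (by linarith only [hn1] : 1 + n ≤ 2 * n) 4
      calc (1 + n) ^ 4 ≤ (2 * n) ^ 4 := h9
        _ = 16 * n ^ 4 := by ring
    calc |Gi c ξ g η μ q k| * (1 + n) ^ 4
        ≤ Cb / n ^ 4 * (16 * n ^ 4) := by
          refine mul_le_mul (hGi2.trans heq2.le) hpow (by positivity) (by positivity)
      _ = 16 * Cb := by field_simp
      _ ≤ C := by rw [hCdef]; exact le_max_right _ _


lemma Gi_measurable : Measurable (Gi c ξ g η μ q) := by
  unfold Gi
  exact (Fi_measurable.add (Fi_measurable.comp measurable_neg)).div_const 2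

lemma Gi_integrable (hc : 0 < c) (hξ : 0 < ξ) (hη : 0 ≤ η) (hμ : 0 < μ) (q : E3) :
    Integrable (Gi c ξ g η μ q) := by
  obtain ⟨C, hC0, hC⟩ := exists_bound (g := g) hc hξ hη hμ q
  have hbd : Integrable (fun x : E3 => C * (1 + ‖x‖) ^ (-(4 : ℝ))) :=
    (integrable_one_add_norm (by rw [finrank_euclideanSpace_fin]; norm_num)).const_mul C
  exact hbd.mono' Gi_measurable.aestronglyMeasurable
    (Eventually.of_forall fun k => by simpa [Real.norm_eq_abs] using hC k)

lemma I_eq (hc : 0 < c) (hξ : 0 < ξ) (hη : 0 ≤ η) (hμ : 0 < μ) (q : E3) (Λ : ℝ) :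
    ∫ k in Metric.closedBall (0 : E3) Λ, Fi c ξ g η μ q k
      = ∫ k in Metric.closedBall (0 : E3) Λ, Gi c ξ g η μ q k := by
  set B := Metric.closedBall (0 : E3) Λ with hB
  have hBm : MeasurableSet B := measurableSet_closedBall
  have hBvol : volume B ≠ ⊤ := measure_closedBall_lt_top.ne
  have hMbound : ∀ k : E3, ‖Fi c ξ g η μ q k‖ ≤ g ^ 2 / (ξ * μ) + g ^ 2 / c ^ 2 :=
    fun k => by
      simpa [Real.norm_eq_abs] using abs_Fi_le (g := g) (q := q) (k := k) hc hξ hη hμ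
  have hFint : IntegrableOn (Fi c ξ g η μ q) B :=
    Measure.integrableOn_of_bounded hBvol Fi_measurable.aestronglyMeasurable
      (Eventually.of_forall hMbound)
  have hFnint : IntegrableOn (fun k => Fi c ξ g η μ q (-k)) B :=
    Measure.integrableOn_of_bounded hBvol
      (Fi_measurable.comp measurable_neg).aestronglyMeasurable
      (Eventually.of_forall fun k => hMbound (-k))
  have hneg : ∫ k in B, Fi c ξ g η μ q (-k) = ∫ k in B, Fi c ξ g η μ q k := by
    rw [← integral_indicator hBm, ← integral_indicator hBm]
    have hsymm : ∀ x : E3, B.indicator (fun k => Fi c ξ g η μ q (-k)) x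
        = B.indicator (Fi c ξ g η μ q) (-x) := by
      intro x
      have h1 : (-x ∈ B) ↔ (x ∈ B) := by simp [hB, mem_closedBall_zero_iff]
      by_cases hx : x ∈ B
      · rw [Set.indicator_of_mem hx, Set.indicator_of_mem (h1.2 hx)]
      · rw [Set.indicator_of_notMem hx,
          Set.indicator_of_notMem (fun h => hx (h1.1 h))]
    rw [show (B.indicator fun k => Fi c ξ g η μ q (-k))
        = (fun x => B.indicator (Fi c ξ g η μ q) (-x)) from funext hsymm]
    exact integral_neg_eq_self _ _
  have h2 : ∫ k in B, Gi c ξ g η μ q k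
      = ∫ k in B, (Fi c ξ g η μ q k + Fi c ξ g η μ q (-k)) / 2 := rfl
  rw [h2, integral_div, integral_add hFint hFnint, hneg]
  ring

end Stmt11Aux

/-- Convergence of the integral defining `θ_{Λ,1,0}` (Theorem 2): with
`ω(k) = √(c²‖k‖² + ξ²‖k‖⁴)`, `P, p ∈ ℝ³`, `η ≥ 0`, `μ > 0`, the symmetric
truncations
`I(Λ) = ∫_{‖k‖≤Λ} (g²‖k‖²/ω(k)) (1/(½‖P−p−k‖² + η + ω(k) + μ) − 1/(½‖k‖² + ω(k))) dk`
converge to some real number `L` as `Λ → ∞`. -/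
theorem stmt_11 (c ξ g : ℝ) (hc : 0 < c) (hξ : 0 < ξ) (hg : 0 ≤ g)
    (ω : EuclideanSpace ℝ (Fin 3) → ℝ)
    (hω : ∀ k, ω k = Real.sqrt (c ^ 2 * ‖k‖ ^ 2 + ξ ^ 2 * ‖k‖ ^ 4))
    (P p : EuclideanSpace ℝ (Fin 3)) (η : ℝ) (hη : 0 ≤ η) (μ : ℝ) (hμ : 0 < μ)
    (I : ℝ → ℝ)
    (hI : ∀ Λ : ℝ, 0 < Λ →
      I Λ = ∫ k in Metric.closedBall (0 : EuclideanSpace ℝ (Fin 3)) Λ,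
        g ^ 2 * ‖k‖ ^ 2 / ω k *
          (1 / ((1 : ℝ) / 2 * ‖P - p - k‖ ^ 2 + η + ω k + μ) -
            1 / ((1 : ℝ) / 2 * ‖k‖ ^ 2 + ω k))) :
    ∃ L : ℝ, Tendsto I atTop (nhds L) := by

  classical
  set G := Stmt11Aux.Gi c ξ g η μ (P - p) with hG
  have hGint : Integrable G := Stmt11Aux.Gi_integrable (g := g) hc hξ hη hμ (P - p)
  refine ⟨∫ k, G k, ?_⟩
  have hptw : ∀ k : EuclideanSpace ℝ (Fin 3),
      Tendsto (fun Λ : ℝ =>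
        (Metric.closedBall (0 : EuclideanSpace ℝ (Fin 3)) Λ).indicator G k)
        atTop (nhds (G k)) := by
    intro k
    refine tendsto_const_nhds.congr' ?_
    filter_upwards [eventually_ge_atTop ‖k‖] with Λ hΛ
    exact (Set.indicator_of_mem (mem_closedBall_zero_iff.2 hΛ) _).symm
  have hbig0 := tendsto_integral_filter_of_dominated_convergence
    (μ := volume) (l := atTop)
    (F := fun (Λ : ℝ) (k : EuclideanSpace ℝ (Fin 3)) =>
      (Metric.closedBall (0 : EuclideanSpace ℝ (Fin 3)) Λ).indicator G k)
    (f := G) (bound := fun k => ‖G k‖)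
    (Eventually.of_forall fun Λ =>
      hGint.aestronglyMeasurable.indicator measurableSet_closedBall)
    (Eventually.of_forall fun Λ => Eventually.of_forall fun k =>
      norm_indicator_le_norm_self G k)
    hGint.norm
    (Eventually.of_forall hptw)
  have hbig : Tendsto (fun Λ : ℝ =>
      ∫ k in Metric.closedBall (0 : EuclideanSpace ℝ (Fin 3)) Λ, G k) atTop
      (nhds (∫ k, G k)) := by
    simpa only [integral_indicator measurableSet_closedBall] using hbig0
  refine hbig.congr' ?_
  filter_upwards [eventually_gt_atTop 0] with Λ hΛ
  rw [hI Λ hΛ, hG, ← Stmt11Aux.I_eq (g := g) hc hξ hη hμ (P - p) Λ]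
  refine integral_congr_ae (Eventually.of_forall fun k => ?_)
  simp only [Stmt11Aux.Fi, Stmt11Aux.om, hω]
end
end

section
/- Let r > 0. Consider the set S of all f in L²(ℝ³; ℂ) (with respect to Lebesgue measure) that admit a representative g : ℝ³ → ℂ satisfying: (i) |g(k)| ≤ r / max(√‖k‖, ‖k‖²) for all k ≠ 0, and (ii) |g(k+p) − g(k)| ≤ r‖p‖/‖k‖² for all k ≠ 0 and all p ∈ ℝ³ with ‖p‖ ≤ ½‖k‖. Then S is totally bounded (equivalently, has compact closure) in L²(ℝ³; ℂ). -/
open MeasureTheory Metric Set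
open scoped ENNReal NNReal

noncomputable section

abbrev E3 := EuclideanSpace ℝ (Fin 3)

lemma stmt13_ae_ne_zero : ∀ᵐ z : E3 ∂volume, z ≠ (0:E3) := by
  have h0 : (volume : Measure E3) {(0:E3)} = 0 := measure_singleton _
  rw [ae_iff]
  simpa [not_not, Set.setOf_eq_eq_singleton] using h0

lemma stmt13_vol_ball (s : ℝ) (hs : 0 < s) :
    (volume : Measure E3) (ball 0 s) = ENNReal.ofReal (s ^ 3) * volume (ball (0:E3) 1) := by
  rw [Measure.addHaar_ball_of_pos _ _ hs]; simp

lemma stmt13_shell_bound {f : E3 → ℝ≥0∞} {s : Set E3} (hs : MeasurableSet s)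
    (b : ℕ → ℝ) (c : ℕ → ℝ≥0∞)
    (h : ∀ x ∈ s, x ≠ 0 → ∃ n, x ∈ ball (0 : E3) (b n) ∧ f x ≤ c n) :
    ∫⁻ x in s, f x ∂volume ≤ ∑' n, c n * volume (ball (0 : E3) (b n)) := by
  have step1 : ∫⁻ x in s, f x ∂volume
      ≤ ∫⁻ x in s, (∑' n, (ball (0 : E3) (b n)).indicator (fun _ => c n) x) ∂volume := by
    refine lintegral_mono_ae ?_
    have h0 : ∀ᵐ x ∂((volume : Measure E3).restrict s), x ≠ 0 :=
      ae_restrict_of_ae stmt13_ae_ne_zero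
    filter_upwards [h0, ae_restrict_mem hs] with x hx0 hxs
    obtain ⟨n, hball, hfx⟩ := h x hxs hx0
    calc f x ≤ c n := hfx
      _ = (ball (0:E3) (b n)).indicator (fun _ => c n) x := (Set.indicator_of_mem hball (fun _ => c n)).symm
      _ ≤ ∑' m, (ball (0:E3) (b m)).indicator (fun _ => c m) x := ENNReal.le_tsum n
  refine step1.trans ?_
  calc ∫⁻ x in s, (∑' n, (ball (0 : E3) (b n)).indicator (fun _ => c n) x) ∂volume
      ≤ ∫⁻ x, (∑' n, (ball (0 : E3) (b n)).indicator (fun _ => c n) x) ∂volume :=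
        setLIntegral_le_lintegral _ _
    _ = ∑' n, ∫⁻ x, (ball (0:E3) (b n)).indicator (fun _ => c n) x ∂volume := by
        rw [lintegral_tsum]
        intro n
        exact (measurable_const.indicator measurableSet_ball).aemeasurable
    _ = ∑' n, c n * volume (ball (0:E3) (b n)) := by
        refine tsum_congr fun n => ?_
        rw [lintegral_indicator measurableSet_ball]
        simp [mul_comm]

lemma stmt13_inner_bound {δ : ℝ} (hδ : 0 < δ) :
    ∫⁻ x in ball (0:E3) δ, ENNReal.ofReal (1 / ‖x‖) ∂volume
      ≤ ENNReal.ofReal (3 * δ ^ 2) * volume (ball (0:E3) 1) := by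
  classical
  refine le_trans (stmt13_shell_bound measurableSet_ball (fun n => δ / 2 ^ n)
      (fun n => ENNReal.ofReal (2 ^ (n + 1) / δ)) ?_) ?_
  · intro x hx hx0
    have hxn : 0 < ‖x‖ := norm_pos_iff.mpr hx0
    have hxδ : ‖x‖ < δ := by rwa [mem_ball_zero_iff] at hx
    have hex : ∃ n : ℕ, δ ≤ 2 ^ (n + 1) * ‖x‖ := by
      obtain ⟨n, hn⟩ := pow_unbounded_of_one_lt (δ / ‖x‖) one_lt_two
      refine ⟨n, ?_⟩
      rw [div_lt_iff₀ hxn] at hn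
      have h2 : (2:ℝ) ^ (n + 1) = 2 * 2 ^ n := by ring
      have h3 : (0:ℝ) < 2 ^ n := by positivity
      nlinarith
    set n₀ := Nat.find hex with hn₀def
    have hn₀ : δ ≤ 2 ^ (n₀ + 1) * ‖x‖ := Nat.find_spec hex
    refine ⟨n₀, ?_, ?_⟩
    · rw [mem_ball_zero_iff]
      rcases Nat.eq_zero_or_pos n₀ with h | h
      · rw [h]; simpa using hxδ
      · obtain ⟨m, hm⟩ := Nat.exists_eq_succ_of_ne_zero h.ne'
        have hmin := Nat.find_min hex (by omega : m < n₀)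
        push_neg at hmin
        rw [lt_div_iff₀ (by positivity : (0:ℝ) < (2:ℝ) ^ n₀)]
        rw [hm, Nat.succ_eq_add_one, mul_comm]
        exact hmin
    · apply ENNReal.ofReal_le_ofReal
      rw [div_le_div_iff₀ hxn hδ]
      linarith
  · have hterm : ∀ n : ℕ, ENNReal.ofReal (2 ^ (n + 1) / δ) * volume (ball (0:E3) (δ / 2 ^ n))
        = ENNReal.ofReal (2 * δ ^ 2) * ENNReal.ofReal (1/4) ^ n * volume (ball (0:E3) 1) := by
      intro n
      rw [stmt13_vol_ball _ (by positivity), ← mul_assoc,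
        ← ENNReal.ofReal_mul (by positivity), ← ENNReal.ofReal_pow (by norm_num),
        ← ENNReal.ofReal_mul (by positivity)]
      congr 2
      have ht : ((2:ℝ)^n) ≠ 0 := by positivity
      have e2 : ((1:ℝ)/4)^n = 1/((2:ℝ)^n)^2 := by
        rw [one_div_pow, show (4:ℝ) = 2^2 by norm_num, ← pow_mul, mul_comm, pow_mul]
      rw [pow_succ, e2]
      field_simp
    calc ∑' n, ENNReal.ofReal (2 ^ (n + 1) / δ) * volume (ball (0:E3) (δ / 2 ^ n))
        = ∑' n, ENNReal.ofReal (2 * δ ^ 2) * ENNReal.ofReal (1/4) ^ n * volume (ball (0:E3) 1) :=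
          tsum_congr hterm
      _ = ENNReal.ofReal (2 * δ ^ 2) * (1 - ENNReal.ofReal (1/4))⁻¹ * volume (ball (0:E3) 1) := by
          rw [ENNReal.tsum_mul_right, ENNReal.tsum_mul_left, ENNReal.tsum_geometric]
      _ ≤ ENNReal.ofReal (3 * δ ^ 2) * volume (ball (0:E3) 1) := by
          refine mul_le_mul_left ?_ _
          have h1 : (1 : ℝ≥0∞) - ENNReal.ofReal (1/4) = ENNReal.ofReal (3/4) := by
            rw [← ENNReal.ofReal_one, ← ENNReal.ofReal_sub _ (by norm_num)]
            norm_num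
          rw [h1, ← ENNReal.ofReal_inv_of_pos (by norm_num), ← ENNReal.ofReal_mul (by positivity)]
          apply ENNReal.ofReal_le_ofReal
          nlinarith [sq_nonneg δ]

lemma stmt13_outer_bound {R : ℝ} (hR : 0 < R) :
    ∫⁻ x in (closedBall (0:E3) R)ᶜ, ENNReal.ofReal (1 / ‖x‖ ^ 4) ∂volume
      ≤ ENNReal.ofReal (16 / R) * volume (ball (0:E3) 1) := by
  classical
  refine le_trans (stmt13_shell_bound measurableSet_closedBall.compl
      (fun n => R * 2 ^ (n + 1)) (fun n => ENNReal.ofReal (1 / (R * 2 ^ n) ^ 4)) ?_) ?_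
  · intro x hx hx0
    have hxR : R < ‖x‖ := by
      simp only [Set.mem_compl_iff, mem_closedBall, dist_zero_right, not_le] at hx
      exact hx
    have hex : ∃ n : ℕ, ‖x‖ < R * 2 ^ (n + 1) := by
      obtain ⟨n, hn⟩ := pow_unbounded_of_one_lt (‖x‖ / R) one_lt_two
      refine ⟨n, ?_⟩
      rw [div_lt_iff₀ hR] at hn
      have h3 : (0:ℝ) < 2 ^ n := by positivity
      have h2 : (2:ℝ) ^ (n + 1) = 2 * 2 ^ n := by ring
      nlinarith
    set n₀ := Nat.find hex with hn₀def
    have hn₀ : ‖x‖ < R * 2 ^ (n₀ + 1) := Nat.find_spec hex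
    have hlow : R * 2 ^ n₀ ≤ ‖x‖ := by
      rcases Nat.eq_zero_or_pos n₀ with h | h
      · rw [h]; simpa using hxR.le
      · obtain ⟨m, hm⟩ := Nat.exists_eq_succ_of_ne_zero h.ne'
        have hmin := Nat.find_min hex (by omega : m < n₀)
        push_neg at hmin
        rw [hm]
        simpa using hmin
    refine ⟨n₀, by rwa [mem_ball_zero_iff], ?_⟩
    apply ENNReal.ofReal_le_ofReal
    have h1 : (0:ℝ) < R * 2 ^ n₀ := by positivity
    have h2 : (R * 2 ^ n₀) ^ 4 ≤ ‖x‖ ^ 4 := pow_le_pow_left₀ h1.le hlow 4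
    exact one_div_le_one_div_of_le (by positivity) h2
  · have hterm : ∀ n : ℕ, ENNReal.ofReal (1 / (R * 2 ^ n) ^ 4) * volume (ball (0:E3) (R * 2 ^ (n + 1)))
        = ENNReal.ofReal (8 / R) * ENNReal.ofReal (1/2) ^ n * volume (ball (0:E3) 1) := by
      intro n
      rw [stmt13_vol_ball _ (by positivity), ← mul_assoc,
        ← ENNReal.ofReal_mul (by positivity), ← ENNReal.ofReal_pow (by norm_num),
        ← ENNReal.ofReal_mul (by positivity)]
      congr 2
      have ht : ((2:ℝ)^n) ≠ 0 := by positivity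
      have e2 : ((1:ℝ)/2)^n = 1/((2:ℝ)^n) := by rw [one_div_pow]
      rw [pow_succ, e2]
      field_simp
      ring
    calc ∑' n, ENNReal.ofReal (1 / (R * 2 ^ n) ^ 4) * volume (ball (0:E3) (R * 2 ^ (n + 1)))
        = ∑' n, ENNReal.ofReal (8 / R) * ENNReal.ofReal (1/2) ^ n * volume (ball (0:E3) 1) :=
          tsum_congr hterm
      _ = ENNReal.ofReal (8 / R) * (1 - ENNReal.ofReal (1/2))⁻¹ * volume (ball (0:E3) 1) := by
          rw [ENNReal.tsum_mul_right, ENNReal.tsum_mul_left, ENNReal.tsum_geometric]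
      _ ≤ ENNReal.ofReal (16 / R) * volume (ball (0:E3) 1) := by
          refine mul_le_mul_left ?_ _
          have h1 : (1 : ℝ≥0∞) - ENNReal.ofReal (1/2) = ENNReal.ofReal (1/2) := by
            rw [← ENNReal.ofReal_one, ← ENNReal.ofReal_sub _ (by norm_num)]
            norm_num
          rw [h1, ← ENNReal.ofReal_inv_of_pos (by norm_num), ← ENNReal.ofReal_mul (by positivity)]
          apply ENNReal.ofReal_le_ofReal
          rw [div_mul_eq_mul_div]
          norm_num

lemma stmt13_enn_sq (w : ℂ) : (‖w‖₊ : ℝ≥0∞) ^ (2:ℝ) = ENNReal.ofReal (‖w‖ ^ 2) := by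
  rw [← ENNReal.ofReal_coe_nnreal, coe_nnnorm,
    ENNReal.ofReal_rpow_of_nonneg (norm_nonneg w) (by norm_num : (0:ℝ) ≤ 2)]
  congr 1
  rw [show (2:ℝ) = ((2:ℕ):ℝ) by norm_num, Real.rpow_natCast]

lemma stmt13_tail_bound {r δ R : ℝ} (hr : 0 < r) (hδ : 0 < δ) (hδ1 : δ ≤ 1) (hR : 1 ≤ R)
    (g : E3 → ℂ)
    (hg : ∀ k : E3, k ≠ 0 → ‖g k‖ ≤ r / max (Real.sqrt ‖k‖) (‖k‖ ^ 2)) :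
    ∫⁻ z in ball (0:E3) δ ∪ (closedBall (0:E3) R)ᶜ, (‖g z‖₊ : ℝ≥0∞) ^ (2:ℝ) ∂volume
      ≤ ENNReal.ofReal (r ^ 2 * (3 * δ ^ 2)) * volume (ball (0:E3) 1)
        + ENNReal.ofReal (r ^ 2 * (16 / R)) * volume (ball (0:E3) 1) := by
  refine (lintegral_union_le _ _ _).trans (add_le_add ?_ ?_)
  · have step : ∫⁻ z in ball (0:E3) δ, (‖g z‖₊ : ℝ≥0∞) ^ (2:ℝ) ∂volume
        ≤ ∫⁻ z in ball (0:E3) δ, ENNReal.ofReal (r^2) * ENNReal.ofReal (1/‖z‖) ∂volume := by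
      refine lintegral_mono_ae ?_
      filter_upwards [ae_restrict_of_ae stmt13_ae_ne_zero] with z hz0
      rw [stmt13_enn_sq, ← ENNReal.ofReal_mul (by positivity)]
      apply ENNReal.ofReal_le_ofReal
      have hzn : 0 < ‖z‖ := norm_pos_iff.mpr hz0
      have hs : 0 < Real.sqrt ‖z‖ := Real.sqrt_pos.mpr hzn
      have h1 : ‖g z‖ ≤ r / Real.sqrt ‖z‖ := by
        refine (hg z hz0).trans ?_
        gcongr
        exact le_max_left _ _
      have h2 : ‖g z‖ ^ 2 ≤ (r / Real.sqrt ‖z‖) ^ 2 := by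
        refine pow_le_pow_left₀ (norm_nonneg _) ?_ 2
        exact h1
      refine h2.trans ?_
      rw [div_pow, Real.sq_sqrt hzn.le, mul_one_div]
    refine step.trans ?_
    rw [lintegral_const_mul' _ _ ENNReal.ofReal_ne_top]
    calc ENNReal.ofReal (r^2) * ∫⁻ z in ball (0:E3) δ, ENNReal.ofReal (1/‖z‖) ∂volume
        ≤ ENNReal.ofReal (r^2) * (ENNReal.ofReal (3 * δ ^ 2) * volume (ball (0:E3) 1)) :=
          mul_le_mul_right (stmt13_inner_bound hδ) _
      _ = ENNReal.ofReal (r ^ 2 * (3 * δ ^ 2)) * volume (ball (0:E3) 1) := by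
          rw [← mul_assoc, ← ENNReal.ofReal_mul (by positivity)]
  · have step : ∫⁻ z in (closedBall (0:E3) R)ᶜ, (‖g z‖₊ : ℝ≥0∞) ^ (2:ℝ) ∂volume
        ≤ ∫⁻ z in (closedBall (0:E3) R)ᶜ, ENNReal.ofReal (r^2) * ENNReal.ofReal (1/‖z‖^4) ∂volume := by
      refine lintegral_mono_ae ?_
      filter_upwards [ae_restrict_mem measurableSet_closedBall.compl] with z hz
      have hzR : R < ‖z‖ := by
        simp only [Set.mem_compl_iff, mem_closedBall, dist_zero_right, not_le] at hz
        exact hz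
      have hzn : (0:ℝ) < ‖z‖ := lt_of_lt_of_le (lt_of_lt_of_le one_pos hR) hzR.le
      have hz0 : z ≠ 0 := norm_pos_iff.mp hzn
      rw [stmt13_enn_sq, ← ENNReal.ofReal_mul (by positivity)]
      apply ENNReal.ofReal_le_ofReal
      have hsq : (0:ℝ) < ‖z‖ ^ 2 := by positivity
      have h1 : ‖g z‖ ≤ r / ‖z‖ ^ 2 := by
        refine (hg z hz0).trans ?_
        gcongr
        exact le_max_right _ _
      have h2 : ‖g z‖ ^ 2 ≤ (r / ‖z‖ ^ 2) ^ 2 := by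
        refine pow_le_pow_left₀ (norm_nonneg _) ?_ 2
        exact h1
      refine h2.trans ?_
      rw [div_pow, mul_one_div]
      gcongr
      · exact le_of_eq (by ring)
    refine step.trans ?_
    rw [lintegral_const_mul' _ _ ENNReal.ofReal_ne_top]
    calc ENNReal.ofReal (r^2) * ∫⁻ z in (closedBall (0:E3) R)ᶜ, ENNReal.ofReal (1/‖z‖^4) ∂volume
        ≤ ENNReal.ofReal (r^2) * (ENNReal.ofReal (16 / R) * volume (ball (0:E3) 1)) :=
          mul_le_mul_right (stmt13_outer_bound (lt_of_lt_of_le one_pos hR)) _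
      _ = ENNReal.ofReal (r ^ 2 * (16 / R)) * volume (ball (0:E3) 1) := by
          rw [← mul_assoc, ← ENNReal.ofReal_mul (by positivity)]

set_option maxHeartbeats 1000000 in
/-- Scalar (one-excitation) content of Lemma 6: the set of `f ∈ L²(ℝ³;ℂ)`
admitting a representative `g` with `|g(k)| ≤ r/(√‖k‖ ∨ ‖k‖²)` for `k ≠ 0` and
`|g(k+p) − g(k)| ≤ r‖p‖/‖k‖²` for `k ≠ 0`, `‖p‖ ≤ ½‖k‖`, is totally bounded
(has compact closure) in `L²`. -/
theorem stmt_13 (r : ℝ) (hr : 0 < r) :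
    TotallyBounded
      { f : Lp ℂ 2 (volume : Measure (EuclideanSpace ℝ (Fin 3))) |
        ∃ g : EuclideanSpace ℝ (Fin 3) → ℂ,
          (⇑f =ᵐ[volume] g) ∧
          (∀ k : EuclideanSpace ℝ (Fin 3), k ≠ 0 →
            ‖g k‖ ≤ r / max (Real.sqrt ‖k‖) (‖k‖ ^ 2)) ∧
          (∀ k p : EuclideanSpace ℝ (Fin 3), k ≠ 0 → ‖p‖ ≤ ‖k‖ / 2 →
            ‖g (k + p) - g k‖ ≤ r * ‖p‖ / ‖k‖ ^ 2) } := by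
  classical
  refine Metric.totallyBounded_of_finite_discretization fun ε hε => ?_
  -- basic constants
  set C := (volume : Measure E3) (ball (0:E3) 1) with hCdef
  have hCfin : C ≠ ⊤ := measure_ball_lt_top.ne
  set V := C.toReal with hVdef
  have hV0 : 0 ≤ V := ENNReal.toReal_nonneg
  have hCV : C = ENNReal.ofReal V := (ENNReal.ofReal_toReal hCfin).symm
  set η := (ε/8)^2/2 with hηdef
  have hηpos : 0 < η := by positivity
  -- choice of δ
  set δ := min 1 (Real.sqrt (η / (3*r^2*V + 1))) with hδdef
  have hδpos : 0 < δ := lt_min one_pos (Real.sqrt_pos.mpr (by positivity))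
  have hδ1 : δ ≤ 1 := min_le_left _ _
  have hδη : r^2*(3*δ^2)*V ≤ η := by
    have hD : (0:ℝ) < 3*r^2*V + 1 := by positivity
    have h1 : δ^2 ≤ η / (3*r^2*V + 1) := by
      have h2 : δ ≤ Real.sqrt (η / (3*r^2*V+1)) := min_le_right _ _
      have h3 := pow_le_pow_left₀ hδpos.le h2 2
      rwa [Real.sq_sqrt (by positivity)] at h3
    have h2 : 3*r^2*V * (η / (3*r^2*V + 1)) ≤ η := by
      calc 3*r^2*V * (η/(3*r^2*V+1)) = η * ((3*r^2*V)/(3*r^2*V+1)) := by ring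
        _ ≤ η * 1 := by
            refine mul_le_mul_of_nonneg_left ?_ hηpos.le
            rw [div_le_one hD]; linarith
        _ = η := mul_one η
    calc r^2*(3*δ^2)*V = 3*r^2*V * δ^2 := by ring
      _ ≤ 3*r^2*V * (η / (3*r^2*V + 1)) := by
          refine mul_le_mul_of_nonneg_left h1 (by positivity)
      _ ≤ η := h2
  -- choice of R
  set R := max 1 ((16*r^2*V + 1)/η) with hRdef
  have hR1 : 1 ≤ R := le_max_left _ _
  have hRpos : 0 < R := lt_of_lt_of_le one_pos hR1
  have hRη : r^2*(16/R)*V ≤ η := by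
    have hR2 : (16*r^2*V + 1)/η ≤ R := le_max_right _ _
    rw [div_le_iff₀ hηpos] at hR2
    have h1 : r^2*(16/R)*V = (16*r^2*V)/R := by ring
    rw [h1, div_le_iff₀ hRpos]
    nlinarith
  -- the annulus
  set A : Set E3 := closedBall (0:E3) R \ ball (0:E3) δ with hAdef
  have hAm : MeasurableSet A := measurableSet_closedBall.diff measurableSet_ball
  have hAfin : (volume : Measure E3) A ≠ ⊤ :=
    ((measure_mono Set.diff_subset).trans_lt measure_closedBall_lt_top).ne
  set W := ((volume : Measure E3) A).toReal with hWdef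
  have hW0 : 0 ≤ W := ENNReal.toReal_nonneg
  have hWA : (volume : Measure E3) A = ENNReal.ofReal W := (ENNReal.ofReal_toReal hAfin).symm
  have hsW : 0 ≤ Real.sqrt W := Real.sqrt_nonneg _
  -- norm lower bound on the annulus
  have hAnorm : ∀ t : E3, t ∈ A → δ ≤ ‖t‖ := by
    intro t ht
    have := ht.2
    rw [mem_ball_zero_iff, not_lt] at this
    exact this
  -- parameters of the grid
  set ρ' : ℝ := (ε/16)/(Real.sqrt W + 1) with hρ'def
  have hρ'pos : 0 < ρ' := by positivity
  set ρ : ℝ := min (δ/2) ((ε/16) * δ^2 / (r * (Real.sqrt W + 1))) with hρdef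
  have hρpos : 0 < ρ := lt_min (by positivity) (by positivity)
  have hρδ : ρ ≤ δ/2 := min_le_left _ _
  set β := 2*ρ' + 2*(r*ρ/δ^2) with hβdef
  have hβpos : 0 < β := by positivity
  have hβle : β ≤ (ε/4)/(Real.sqrt W + 1) := by
    have h1 : r*ρ/δ^2 ≤ (ε/16)/(Real.sqrt W + 1) := by
      have h2 : ρ ≤ (ε/16) * δ^2 / (r * (Real.sqrt W + 1)) := min_le_right _ _
      calc r*ρ/δ^2 ≤ r*((ε/16) * δ^2 / (r * (Real.sqrt W + 1)))/δ^2 := by gcongr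
        _ = (ε/16)/(Real.sqrt W + 1) := by
            field_simp
    calc β = 2*ρ' + 2*(r*ρ/δ^2) := hβdef
      _ ≤ 2*((ε/16)/(Real.sqrt W + 1)) + 2*((ε/16)/(Real.sqrt W + 1)) := by
          refine add_le_add (by rw [hρ'def]) (by linarith)
      _ = (ε/4)/(Real.sqrt W + 1) := by ring
  have hWβ : Real.sqrt W * β ≤ ε/4 := by
    have h2 : Real.sqrt W/(Real.sqrt W+1) ≤ 1 := by
      rw [div_le_one (by positivity)]; linarith
    calc Real.sqrt W * β ≤ Real.sqrt W * ((ε/4)/(Real.sqrt W+1)) := by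
          exact mul_le_mul_of_nonneg_left hβle hsW
      _ = (ε/4) * (Real.sqrt W/(Real.sqrt W+1)) := by ring
      _ ≤ (ε/4) * 1 := by
          refine mul_le_mul_of_nonneg_left h2 (by positivity)
      _ = ε/4 := mul_one _
  -- compact annulus, finite grid
  have hAcomp : IsCompact A := by
    refine (isCompact_closedBall (0:E3) R).of_isClosed_subset ?_ Set.diff_subset
    rw [hAdef, Set.diff_eq]
    exact Metric.isClosed_closedBall.inter isOpen_ball.isClosed_compl
  obtain ⟨Tset, hTsub, hTfin, hTcov⟩ :=
    hAcomp.elim_finite_subcover_image (fun t (_ : t ∈ A) => isOpen_ball)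
      (fun x hx => Set.mem_biUnion hx (mem_ball_self hρpos))
  set M := r / Real.sqrt δ with hMdef
  obtain ⟨Qset, hQsub, hQfin, hQcov⟩ :=
    (isCompact_closedBall (0:ℂ) M).elim_finite_subcover_image
      (fun q (_ : q ∈ closedBall (0:ℂ) M) => isOpen_ball)
      (fun z hz => Set.mem_biUnion hz (mem_ball_self hρ'pos))
  -- representatives
  have hrep : ∀ x : ↥{ f : Lp ℂ 2 (volume : Measure (EuclideanSpace ℝ (Fin 3))) |
        ∃ g : EuclideanSpace ℝ (Fin 3) → ℂ,
          (⇑f =ᵐ[volume] g) ∧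
          (∀ k : EuclideanSpace ℝ (Fin 3), k ≠ 0 →
            ‖g k‖ ≤ r / max (Real.sqrt ‖k‖) (‖k‖ ^ 2)) ∧
          (∀ k p : EuclideanSpace ℝ (Fin 3), k ≠ 0 → ‖p‖ ≤ ‖k‖ / 2 →
            ‖g (k + p) - g k‖ ≤ r * ‖p‖ / ‖k‖ ^ 2) },
      ∃ g : E3 → ℂ,
          (⇑(x.1) =ᵐ[volume] g) ∧
          (∀ k : E3, k ≠ 0 →
            ‖g k‖ ≤ r / max (Real.sqrt ‖k‖) (‖k‖ ^ 2)) ∧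
          (∀ k p : E3, k ≠ 0 → ‖p‖ ≤ ‖k‖ / 2 →
            ‖g (k + p) - g k‖ ≤ r * ‖p‖ / ‖k‖ ^ 2) := fun x => x.2
  choose gf hae hbb hcc using hrep
  -- quantization
  have hchoice : ∀ x (t : E3), t ∈ Tset → ∃ q ∈ Qset, gf x t ∈ ball q ρ' := by
    intro x t ht
    have htA : t ∈ A := hTsub ht
    have htδ : δ ≤ ‖t‖ := hAnorm t htA
    have ht0 : t ≠ 0 := by
      intro h; rw [h, norm_zero] at htδ; linarith
    have hsδ : 0 < Real.sqrt δ := Real.sqrt_pos.mpr hδpos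
    have hmem : gf x t ∈ closedBall (0:ℂ) M := by
      rw [mem_closedBall, Complex.dist_eq, sub_zero]
      calc ‖gf x t‖ ≤ r / max (Real.sqrt ‖t‖) (‖t‖ ^ 2) := hbb x t ht0
        _ ≤ r / Real.sqrt δ := by
            have h1 : Real.sqrt δ ≤ max (Real.sqrt ‖t‖) (‖t‖ ^ 2) :=
              (Real.sqrt_le_sqrt htδ).trans (le_max_left _ _)
            gcongr
    have := hQcov hmem
    rw [Set.mem_iUnion₂] at this
    obtain ⟨q, hq, hq2⟩ := this
    exact ⟨q, hq, hq2⟩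
  choose qc hqQ hqball using hchoice
  haveI := hTfin.fintype
  haveI := hQfin.fintype
  haveI : DecidableEq ↥Tset := Classical.decEq _
  refine ⟨↥Tset → ↥Qset, inferInstance,
    fun x => fun t => (⟨qc x t.1 t.2, hqQ x t.1 t.2⟩ : ↥Qset), fun x y hxy => ?_⟩
  have hq_eq : ∀ (t : E3) (ht : t ∈ Tset), qc x t ht = qc y t ht := by
    intro t ht
    exact congrArg Subtype.val (congrFun hxy ⟨t, ht⟩)
  set g₁ := gf x with hg₁def
  set g₂ := gf y with hg₂def
  -- sup bound on the annulus
  have hsup : ∀ k ∈ A, ‖g₁ k - g₂ k‖ ≤ β := by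
    intro k hk
    have := hTcov hk
    rw [Set.mem_iUnion₂] at this
    obtain ⟨t, ht, hkt⟩ := this
    have htA : t ∈ A := hTsub ht
    have htδ : δ ≤ ‖t‖ := hAnorm t htA
    have ht0 : t ≠ 0 := by
      intro h; rw [h, norm_zero] at htδ; linarith
    have hktn : ‖k - t‖ < ρ := by rwa [mem_ball, dist_eq_norm] at hkt
    have hp : ‖k - t‖ ≤ ‖t‖/2 := by linarith
    have htk : t + (k - t) = k := by abel
    have hδ2 : (0:ℝ) < δ^2 := by positivity
    have htsq : δ^2 ≤ ‖t‖^2 := by nlinarith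
    have hL1 : ‖g₁ k - g₁ t‖ ≤ r*ρ/δ^2 := by
      have h := hcc x t (k - t) ht0 hp
      rw [htk] at h
      refine h.trans ?_
      gcongr
    have hL2 : ‖g₂ k - g₂ t‖ ≤ r*ρ/δ^2 := by
      have h := hcc y t (k - t) ht0 hp
      rw [htk] at h
      refine h.trans ?_
      gcongr
    have hqd : dist (g₁ t) (g₂ t) ≤ 2 * ρ' := by
      have e1 : dist (g₁ t) (qc x t ht) < ρ' := by
        have := hqball x t ht; rwa [mem_ball] at this
      have e2 : dist (g₂ t) (qc y t ht) < ρ' := by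
        have := hqball y t ht; rwa [mem_ball] at this
      rw [hq_eq t ht] at e1
      calc dist (g₁ t) (g₂ t) ≤ dist (g₁ t) (qc y t ht) + dist (qc y t ht) (g₂ t) :=
            dist_triangle _ _ _
        _ ≤ ρ' + ρ' := by
            refine add_le_add e1.le ?_
            rw [dist_comm]; exact e2.le
        _ = 2 * ρ' := by ring
    have htri : dist (g₁ k) (g₂ k)
        ≤ dist (g₁ k) (g₁ t) + dist (g₁ t) (g₂ t) + dist (g₂ t) (g₂ k) :=
      dist_triangle4 _ _ _ _
    rw [← Complex.dist_eq]
    have e3 : dist (g₁ k) (g₁ t) = ‖g₁ k - g₁ t‖ := Complex.dist_eq _ _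
    have e4 : dist (g₂ t) (g₂ k) = ‖g₂ k - g₂ t‖ := by
      rw [dist_comm]; exact Complex.dist_eq _ _
    rw [e3, e4] at htri
    rw [hβdef]
    linarith
  -- the L² estimate
  rw [Lp.dist_def]
  have hm1 : AEStronglyMeasurable g₁ volume := (Lp.aestronglyMeasurable x.1).congr (hae x)
  have hm2 : AEStronglyMeasurable g₂ volume := (Lp.aestronglyMeasurable y.1).congr (hae y)
  have haeq : (⇑(x.1) - ⇑(y.1) : E3 → ℂ) =ᵐ[volume] g₁ - g₂ := (hae x).sub (hae y)
  have hdec : g₁ - g₂ = A.indicator (g₁ - g₂) + (Aᶜ.indicator g₁ - Aᶜ.indicator g₂) := by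
    funext z
    by_cases hz : z ∈ A
    · have hz' : z ∉ Aᶜ := by simp [hz]
      simp [Set.indicator_of_mem hz, Set.indicator_of_notMem hz']
    · have hz' : z ∈ Aᶜ := hz
      simp [Set.indicator_of_notMem hz, Set.indicator_of_mem hz']
  have hAc : MeasurableSet Aᶜ := hAm.compl
  -- bound on the annulus part
  have bound1 : eLpNorm (A.indicator (g₁ - g₂)) 2 volume ≤ ENNReal.ofReal (ε/4) := by
    rw [eLpNorm_indicator_eq_eLpNorm_restrict hAm]
    refine (eLpNorm_le_of_ae_bound (C := β) ?_).trans ?_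
    · filter_upwards [ae_restrict_mem hAm] with z hz
      have := hsup z hz
      simpa using this
    · rw [Measure.restrict_apply_univ, hWA]
      simp only [ENNReal.toReal_ofNat]
      rw [ENNReal.ofReal_rpow_of_nonneg hW0 (by norm_num),
        ← ENNReal.ofReal_mul (by positivity)]
      apply ENNReal.ofReal_le_ofReal
      have hhalf : ((2:ℝ))⁻¹ = 1/2 := by norm_num
      rw [hhalf, ← Real.sqrt_eq_rpow]
      exact hWβ
  -- bound on the tail parts
  have hsubc : Aᶜ ⊆ ball (0:E3) δ ∪ (closedBall (0:E3) R)ᶜ := by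
    intro z hz
    by_cases hb : z ∈ ball (0:E3) δ
    · exact Or.inl hb
    · refine Or.inr fun hc => hz ⟨hc, hb⟩
  have tailsum : ENNReal.ofReal (r ^ 2 * (3 * δ ^ 2)) * C + ENNReal.ofReal (r ^ 2 * (16 / R)) * C
      ≤ ENNReal.ofReal ((ε/8)^2) := by
    rw [hCV, ← ENNReal.ofReal_mul (by positivity), ← ENNReal.ofReal_mul (by positivity),
      ← ENNReal.ofReal_add (by positivity) (by positivity)]
    apply ENNReal.ofReal_le_ofReal
    have e1 : r ^ 2 * (3 * δ ^ 2) * V = r^2*(3*δ^2)*V := by ring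
    have : r ^ 2 * (3 * δ ^ 2) * V + r ^ 2 * (16 / R) * V ≤ η + η := by
      refine add_le_add ?_ ?_
      · calc r ^ 2 * (3 * δ ^ 2) * V = r^2*(3*δ^2)*V := by ring
          _ ≤ η := hδη
      · exact hRη
    calc r ^ 2 * (3 * δ ^ 2) * V + r ^ 2 * (16 / R) * V ≤ η + η := this
      _ = (ε/8)^2 := by rw [hηdef]; ring
  have bound2 : ∀ g : E3 → ℂ,
      (∀ k : E3, k ≠ 0 → ‖g k‖ ≤ r / max (Real.sqrt ‖k‖) (‖k‖ ^ 2)) →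
      eLpNorm (Aᶜ.indicator g) 2 volume ≤ ENNReal.ofReal (ε/8) := by
    intro g hg
    rw [eLpNorm_indicator_eq_eLpNorm_restrict hAc,
      eLpNorm_eq_lintegral_rpow_enorm_toReal two_ne_zero ENNReal.ofNat_ne_top]
    simp only [ENNReal.toReal_ofNat]
    have h1 : ∫⁻ z in Aᶜ, (‖g z‖₊ : ℝ≥0∞) ^ (2:ℝ) ∂volume
        ≤ ∫⁻ z in ball (0:E3) δ ∪ (closedBall (0:E3) R)ᶜ, (‖g z‖₊ : ℝ≥0∞) ^ (2:ℝ) ∂volume :=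
      lintegral_mono_set hsubc
    have h2 := stmt13_tail_bound hr hδpos hδ1 hR1 g hg
    have h3 : ∫⁻ z in Aᶜ, (‖g z‖₊ : ℝ≥0∞) ^ (2:ℝ) ∂volume ≤ ENNReal.ofReal ((ε/8)^2) :=
      h1.trans (h2.trans tailsum)
    calc (∫⁻ z in Aᶜ, (‖g z‖₊ : ℝ≥0∞) ^ (2:ℝ) ∂volume) ^ (1/(2:ℝ))
        ≤ (ENNReal.ofReal ((ε/8)^2)) ^ (1/(2:ℝ)) := ENNReal.rpow_le_rpow h3 (by norm_num)
      _ = ENNReal.ofReal (ε/8) := by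
          rw [ENNReal.ofReal_rpow_of_nonneg (by positivity) (by norm_num),
            ← Real.sqrt_eq_rpow, Real.sqrt_sq (by positivity)]
  have key : eLpNorm (⇑(x.1) - ⇑(y.1) : E3 → ℂ) 2 volume ≤ ENNReal.ofReal (ε/2) := by
    rw [eLpNorm_congr_ae haeq, hdec]
    calc eLpNorm (A.indicator (g₁ - g₂) + (Aᶜ.indicator g₁ - Aᶜ.indicator g₂)) 2 volume
        ≤ eLpNorm (A.indicator (g₁ - g₂)) 2 volume
          + eLpNorm (Aᶜ.indicator g₁ - Aᶜ.indicator g₂) 2 volume := by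
          refine eLpNorm_add_le ((hm1.sub hm2).indicator hAm)
            ((hm1.indicator hAc).sub (hm2.indicator hAc)) one_le_two
      _ ≤ eLpNorm (A.indicator (g₁ - g₂)) 2 volume
          + (eLpNorm (Aᶜ.indicator g₁) 2 volume + eLpNorm (Aᶜ.indicator g₂) 2 volume) := by
          refine add_le_add_right
            (eLpNorm_sub_le (hm1.indicator hAc) (hm2.indicator hAc) one_le_two) _
      _ ≤ ENNReal.ofReal (ε/4) + (ENNReal.ofReal (ε/8) + ENNReal.ofReal (ε/8)) :=
          add_le_add bound1 (add_le_add (bound2 g₁ (hbb x)) (bound2 g₂ (hbb y)))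
      _ ≤ ENNReal.ofReal (ε/2) := by
          rw [← ENNReal.ofReal_add (by positivity) (by positivity),
            ← ENNReal.ofReal_add (by positivity) (by positivity)]
          apply ENNReal.ofReal_le_ofReal
          linarith
  have := ENNReal.toReal_le_of_le_ofReal (by positivity) key
  linarith
end
end
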